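/- arXiv:2412.11675 — 13 statements merged into one kernel-verified Lean document; each statement's English description precedes it below -/
import Mathlib

section
/- Let Λ be a directed set and (g^η_λ, (X_λ, F_λ)) an inverse system of upper semicontinuous set-valued systems on compact Hausdorff spaces, i.e. each bonding map g^η_λ : X_η → X_λ is continuous, satisfies Condition (1.11), g^λ_λ = id, g^ν_λ = g^η_λ ∘ g^ν_η for λ ≤ η ≤ ν, and the inverse system of spaces (g^η_λ, X_λ) satisfies the Mittag-Leffler condition. Then the inverse limit set-valued map lim← F_λ on lim←(g^η_λ, X_λ) is a well-defined upper semicontinuous set-valued map: for every point (x_λ) of the inverse limit, lim← F_λ((x_λ)) is a nonempty compact subset of the inverse limit, and lim← F_λ has closed graph. -/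
open Set Filter Metric Topology

section Defs

variable {X : Type*} [TopologicalSpace X]

/-- A finite open cover of `X`. -/
def IsFOC (U : Set (Set X)) : Prop :=
  U.Finite ∧ (∀ V ∈ U, IsOpen V) ∧ ⋃₀ U = Set.univ

/-- Upper semicontinuity for set-valued maps. -/
def USCSV (F : X → Set X) : Prop :=
  ∀ x : X, ∀ U : Set X, IsOpen U → F x ⊆ U →
    ∃ V : Set X, IsOpen V ∧ x ∈ V ∧ ∀ y ∈ V, F y ⊆ U

/-- Lower semicontinuity for set-valued maps. -/
def LSCSV (F : X → Set X) : Prop :=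
  ∀ x : X, ∀ U : Set X, IsOpen U → (F x ∩ U).Nonempty →
    ∃ V : Set X, IsOpen V ∧ x ∈ V ∧ ∀ y ∈ V, (F y ∩ U).Nonempty

/-- An `F`-orbit. -/
def IsSVOrbit (F : X → Set X) (z : ℕ → X) : Prop := ∀ i, z (i + 1) ∈ F (z i)

/-- The orbit space of a set-valued system. -/
def svOrbitSet (F : X → Set X) : Set (ℕ → X) := {w | ∀ i, w (i + 1) ∈ F (w i)}

/-- A `𝒱`-pseudo-orbit of the set-valued map `F`. -/
def IsSVPseudoOrbit (F : X → Set X) (V : Set (Set X)) (x : ℕ → X) : Prop :=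
  ∀ i, ∃ W ∈ V, (F (x i) ∩ W).Nonempty ∧ x (i + 1) ∈ W

/-- `x` is `𝒰`-shadowed by `z`. -/
def ShadowedBy (U : Set (Set X)) (x z : ℕ → X) : Prop :=
  ∀ i, ∃ W ∈ U, x i ∈ W ∧ z i ∈ W

/-- The set-valued shadowing property (finite open cover version). -/
def SVShadowing (F : X → Set X) : Prop :=
  ∀ U : Set (Set X), IsFOC U → ∃ V : Set (Set X), IsFOC V ∧
    ∀ x : ℕ → X, IsSVPseudoOrbit F V x →
      ∃ z : ℕ → X, IsSVOrbit F z ∧ ShadowedBy U x z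

/-- Inverse image of a set under a set-valued map: `F⁻¹(A) = {x | F x ∩ A ≠ ∅}`. -/
def Finv (F : X → Set X) (A : Set X) : Set X := {x | (F x ∩ A).Nonempty}

/-- The `n`-tuple orbital discriminant `[U_0, …, U_n]`. -/
def tupleDisc (F : X → Set X) : ℕ → (ℕ → Set X) → Set X
  | 0, U => U 0
  | n + 1, U => U 0 ∩ Finv F (tupleDisc F n fun i => U (i + 1))

/-- The orbital discriminant `[U_i] = ⋂ₙ [U_0, …, U_n]`. -/
def seqDisc (F : X → Set X) (U : ℕ → Set X) : Set X := ⋂ n, tupleDisc F n U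

end Defs

/-- The inverse limit of an inverse system of spaces, as a subset of the product. -/
def invLimSet {Λ : Type*} [Preorder Λ] {Xl : Λ → Type*}
    (g : ∀ ⦃l e : Λ⦄, l ≤ e → Xl e → Xl l) : Set (∀ l, Xl l) :=
  {x | ∀ l e : Λ, ∀ h : l ≤ e, g h (x e) = x l}

/-- The inverse limit set-valued map `lim← F_λ`. -/
def limFmap {Λ : Type*} [Preorder Λ] {Xl : Λ → Type*}
    (g : ∀ ⦃l e : Λ⦄, l ≤ e → Xl e → Xl l)
    (F : ∀ l, Xl l → Set (Xl l)) (x : ∀ l, Xl l) : Set (∀ l, Xl l) :=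
  {y | y ∈ invLimSet g ∧ ∀ l, y l ∈ F l (x l)}

lemma usc_closed_graph {X : Type*} [TopologicalSpace X] [T2Space X]
    {F : X → Set X} (hc : ∀ x, IsCompact (F x)) (h : USCSV F) :
    IsClosed {q : X × X | q.2 ∈ F q.1} := by
  rw [← isOpen_compl_iff, isOpen_iff_mem_nhds]
  rintro ⟨a, b⟩ hab
  simp only [mem_compl_iff, mem_setOf_eq] at hab
  obtain ⟨U, W, hU, hW, hFU, hbW, hUW⟩ :=
    SeparatedNhds.of_isCompact_isCompact (hc a) isCompact_singleton
      (disjoint_singleton_right.mpr hab)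
  obtain ⟨V, hV, haV, hVF⟩ := h a U hU hFU
  rw [mem_nhds_prod_iff]
  refine ⟨V, hV.mem_nhds haV, W, hW.mem_nhds (hbW rfl), ?_⟩
  rintro ⟨u, w⟩ ⟨hu, hw⟩ hmem
  exact (hUW.ne_of_mem (hVF u hu hmem) hw) rfl

/-- Theorem 2.25: given a Mittag-Leffler inverse system of usc set-valued
systems on compact Hausdorff spaces, the inverse limit set-valued map is a well-defined
usc set-valued map: it has nonempty compact values contained in the inverse limit, and a
closed graph over the inverse limit. -/
theorem invLim_usc
    {Λ : Type*} [Preorder Λ] [IsDirected Λ (· ≤ ·)]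
    (Xl : Λ → Type*) [∀ l, TopologicalSpace (Xl l)] [∀ l, CompactSpace (Xl l)]
    [∀ l, T2Space (Xl l)]
    (F : ∀ l, Xl l → Set (Xl l))
    (hFne : ∀ l x, (F l x).Nonempty) (hFcpt : ∀ l x, IsCompact (F l x))
    (hFusc : ∀ l, USCSV (F l))
    (g : ∀ ⦃l e : Λ⦄, l ≤ e → Xl e → Xl l)
    (hgcont : ∀ (l e : Λ) (h : l ≤ e), Continuous (g h))
    (hgid : ∀ (l : Λ) (x : Xl l), g (le_refl l) x = x)
    (hgcomp : ∀ (l e m : Λ) (h1 : l ≤ e) (h2 : e ≤ m) (x : Xl m),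
      g h1 (g h2 x) = g (h1.trans h2) x)
    (hg11 : ∀ (l e : Λ) (h : l ≤ e) (x : Xl e), g h '' F e x ⊆ F l (g h x))
    (hML : ∀ l : Λ, ∃ e : Λ, ∃ h : l ≤ e, ∀ (m : Λ) (h2 : e ≤ m),
      Set.range (g h) = Set.range (g (h.trans h2))) :
    (∀ x ∈ invLimSet g,
      (limFmap g F x).Nonempty ∧ IsCompact (limFmap g F x) ∧
        limFmap g F x ⊆ invLimSet g) ∧
    IsClosed {p : ↥(invLimSet g) × ↥(invLimSet g) |
      (p.2 : ∀ l, Xl l) ∈ limFmap g F (p.1 : ∀ l, Xl l)} := by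
  classical
  have hinvcl : IsClosed (invLimSet g) := by
    have : invLimSet g = ⋂ (l : Λ) (e : Λ) (h : l ≤ e), {x | g h (x e) = x l} := by
      ext y; simp [invLimSet]
    rw [this]
    exact isClosed_iInter fun l => isClosed_iInter fun e => isClosed_iInter fun h =>
      isClosed_eq ((hgcont l e h).comp (continuous_apply e)) (continuous_apply l)
  constructor
  · intro x hx
    -- closedness of limFmap g F x
    have hcl : IsClosed (limFmap g F x) := by
      have : limFmap g F x = invLimSet g ∩ ⋂ l, (fun y : ∀ l, Xl l => y l) ⁻¹' (F l (x l)) := by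
        ext y; simp [limFmap, Set.mem_iInter, and_comm]
      rw [this]
      exact hinvcl.inter (isClosed_iInter fun l =>
        (hFcpt l (x l)).isClosed.preimage (continuous_apply l))
    refine ⟨?_, hcl.isCompact, fun y hy => hy.1⟩
    -- nonemptiness
    by_cases hΛ : Nonempty Λ
    · set K : Λ → Set (∀ l, Xl l) := fun l0 =>
        {y | y l0 ∈ F l0 (x l0) ∧ ∀ m, ∀ h : m ≤ l0, y m = g h (y l0)} with hK
      have hKcl : ∀ l0, IsClosed (K l0) := by
        intro l0
        refine IsClosed.inter ((hFcpt l0 (x l0)).isClosed.preimage (continuous_apply l0)) ?_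
        have he : {y : ∀ l, Xl l | ∀ m, ∀ h : m ≤ l0, y m = g h (y l0)} =
            ⋂ m, ⋂ h : m ≤ l0, {y : ∀ l, Xl l | y m = g h (y l0)} := by
          ext y; simp
        show IsClosed {y : ∀ l, Xl l | ∀ m, ∀ h : m ≤ l0, y m = g h (y l0)}
        rw [he]
        refine isClosed_iInter fun m => isClosed_iInter fun h => ?_
        exact isClosed_eq (continuous_apply m) ((hgcont m l0 h).comp (continuous_apply l0))
      have hKne : ∀ l0, (K l0).Nonempty := by
        intro l0
        obtain ⟨z, hz⟩ := hFne l0 (x l0)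
        refine ⟨fun m => if h : m ≤ l0 then g h z else x m, ?_, ?_⟩
        · simp only [dif_pos (le_refl l0), hgid]; exact hz
        · intro m h
          simp only [dif_pos h, dif_pos (le_refl l0), hgid]
      have hKsub : ∀ a c : Λ, a ≤ c → K c ⊆ K a := by
        intro a c hac y hy
        have hya : y a = g hac (y c) := hy.2 a hac
        constructor
        · rw [hya, ← hx a c hac]
          exact hg11 a c hac (x c) ⟨y c, hy.1, rfl⟩
        · intro m h
          rw [hya, hgcomp m a c h hac, ← hy.2 m (h.trans hac)]
      have hKdir : Directed (· ⊇ ·) K := by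
        intro a b
        obtain ⟨c, hac, hbc⟩ := directed_of (· ≤ ·) a b
        exact ⟨c, hKsub a c hac, hKsub b c hbc⟩
      obtain ⟨y, hy⟩ := IsCompact.nonempty_iInter_of_directed_nonempty_isCompact_isClosed
        K hKdir hKne (fun l0 => (hKcl l0).isCompact) hKcl
      simp only [Set.mem_iInter] at hy
      refine ⟨y, ⟨?_, fun l => (hy l).1⟩⟩
      intro l e h
      exact ((hy e).2 l h).symm
    · refine ⟨x, ⟨hx, fun l => absurd ⟨l⟩ hΛ⟩⟩
  · -- closed graph
    have : {p : ↥(invLimSet g) × ↥(invLimSet g) |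
        (p.2 : ∀ l, Xl l) ∈ limFmap g F (p.1 : ∀ l, Xl l)} =
        ⋂ l, (fun p : ↥(invLimSet g) × ↥(invLimSet g) =>
          (((p.1 : ∀ l, Xl l) l, (p.2 : ∀ l, Xl l) l) : Xl l × Xl l)) ⁻¹'
          {q : Xl l × Xl l | q.2 ∈ F l q.1} := by
      ext p
      simp only [Set.mem_iInter, Set.mem_preimage, Set.mem_setOf_eq, limFmap]
      exact ⟨fun h l => h.2 l, fun h => ⟨p.2.2, h⟩⟩
    rw [this]
    refine isClosed_iInter fun l => IsClosed.preimage ?_ (usc_closed_graph (hFcpt l) (hFusc l))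
    exact ((continuous_apply l).comp (continuous_subtype_val.comp continuous_fst)).prodMk
      ((continuous_apply l).comp (continuous_subtype_val.comp continuous_snd))
end

section
/- Let F : X → 2^X be an upper semicontinuous set-valued map on a compact Hausdorff space X. Then the following are equivalent: (i) F is expansive; (ii) F has a generator; (iii) F has a weak generator. -/
open Set Filter Metric Topology

/-- A generator for a set-valued map. -/
def IsGenerator {X : Type*} [TopologicalSpace X] (F : X → Set X) (U : Set (Set X)) : Prop :=
  IsFOC U ∧ ∀ Us : ℕ → Set X, (∀ i, Us i ∈ U) →
    (seqDisc F fun i => closure (Us i)).Subsingleton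

/-- A weak generator for a set-valued map. -/
def IsWeakGenerator {X : Type*} [TopologicalSpace X] (F : X → Set X) (U : Set (Set X)) : Prop :=
  IsFOC U ∧ ∀ Us : ℕ → Set X, (∀ i, Us i ∈ U) → (seqDisc F Us).Subsingleton

/-- Expansiveness of a set-valued map with respect to the uniformity. -/
def ExpansiveSV {X : Type*} [UniformSpace X] (F : X → Set X) : Prop :=
  ∃ δ ∈ uniformity X, ∀ x y : ℕ → X, IsSVOrbit F x → IsSVOrbit F y →
    (∀ i, (x i, y i) ∈ δ) → x 0 = y 0

/-!
A point of `[closure U_i]` lies on an orbit that stays in the sets `closure U_i`: finite orbit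
segments exist by definition of the discriminant, and since the graph of an usc map with compact
values is closed, a limit of such segments in the compact space `ℕ → X` is an orbit. If the `U_i`
are small, two such orbits are pointwise close, so expansiveness yields a generator. Conversely,
for a Lebesgue entourage `V` of a weak generator, two orbits that stay `V`-close follow a common
sequence of members, so they start in the same discriminant and hence at the same point.
-/

open UniformSpace

open scoped Uniformity

section Discriminant

variable {X : Type*} {F : X → Set X}

theorem tupleDisc_mono {U V : ℕ → Set X} (h : ∀ i, U i ⊆ V i) (n : ℕ) :
    tupleDisc F n U ⊆ tupleDisc F n V := by
  induction n generalizing U V with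
  | zero => exact h 0
  | succ n ih =>
    rintro a ⟨ha, b, hbF, hb⟩
    exact ⟨h 0 ha, b, hbF, ih (fun i => h (i + 1)) hb⟩

theorem seqDisc_mono {U V : ℕ → Set X} (h : ∀ i, U i ⊆ V i) : seqDisc F U ⊆ seqDisc F V :=
  iInter_mono (tupleDisc_mono h)

theorem IsSVOrbit.zero_mem_tupleDisc {w : ℕ → X} (hw : IsSVOrbit F w) {U : ℕ → Set X}
    (hU : ∀ i, w i ∈ U i) (n : ℕ) : w 0 ∈ tupleDisc F n U := by
  induction n generalizing w U with
  | zero => exact hU 0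
  | succ n ih => exact ⟨hU 0, w 1, hw 0, ih (fun i => hw (i + 1)) fun i => hU (i + 1)⟩

theorem IsSVOrbit.zero_mem_seqDisc {w : ℕ → X} (hw : IsSVOrbit F w) {U : ℕ → Set X}
    (hU : ∀ i, w i ∈ U i) : w 0 ∈ seqDisc F U :=
  mem_iInter.mpr (hw.zero_mem_tupleDisc hU)

theorem exists_segment_of_mem_tupleDisc {n : ℕ} {U : ℕ → Set X} {a : X}
    (ha : a ∈ tupleDisc F n U) :
    ∃ w : ℕ → X, w 0 = a ∧ (∀ i < n, w (i + 1) ∈ F (w i)) ∧ ∀ i ≤ n, w i ∈ U i := by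
  induction n generalizing U a with
  | zero =>
    refine ⟨fun _ => a, rfl, fun i hi => absurd hi i.not_lt_zero, fun i hi => ?_⟩
    obtain rfl := Nat.le_zero.mp hi
    exact ha
  | succ n ih =>
    obtain ⟨ha, b, hbF, hb⟩ := ha
    obtain ⟨w, rfl, hwF, hwU⟩ := ih hb
    refine ⟨fun | 0 => a | i + 1 => w i, rfl, ?_, ?_⟩
    · rintro (_ | i) hi
      exacts [hbF, hwF i (by omega)]
    · rintro (_ | i) hi
      exacts [ha, hwU i (by omega)]

end Discriminant

section Topological

variable {X : Type*} [TopologicalSpace X] {F : X → Set X}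

theorem IsGenerator.isWeakGenerator {U : Set (Set X)} (hU : IsGenerator F U) :
    IsWeakGenerator F U :=
  ⟨hU.1, fun Us hUs => (hU.2 Us hUs).anti (seqDisc_mono fun _ => subset_closure)⟩

theorem USCSV.isClosed_graph [T2Space X] (hFusc : USCSV F) (hFcpt : ∀ x, IsCompact (F x)) :
    IsClosed {p : X × X | p.2 ∈ F p.1} := by
  refine isOpen_compl_iff.mp (isOpen_iff_mem_nhds.mpr ?_)
  rintro ⟨x, y⟩ hxy
  obtain ⟨U, W, hU, hW, hFU, hyW, hUW⟩ :=
    SeparatedNhds.of_isCompact_isCompact (hFcpt x) isCompact_singleton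
      (disjoint_singleton_right.mpr hxy)
  obtain ⟨V, hV, hxV, hFV⟩ := hFusc x U hU hFU
  filter_upwards [(hV.prod hW).mem_nhds ⟨hxV, hyW rfl⟩]
  rintro ⟨a, b⟩ ⟨haV, hbW⟩ hb
  exact disjoint_left.mp hUW (hFV a haV hb) hbW

theorem exists_orbit_of_mem_seqDisc [CompactSpace X] [T2Space X] (hFusc : USCSV F)
    (hFcpt : ∀ x, IsCompact (F x)) {C : ℕ → Set X} (hC : ∀ i, IsClosed (C i)) {a : X}
    (ha : a ∈ seqDisc F C) : ∃ w : ℕ → X, IsSVOrbit F w ∧ w 0 = a ∧ ∀ i, w i ∈ C i := by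
  let S : ℕ → Set (ℕ → X) := fun n =>
    {w | w 0 = a} ∩ (⋂ i < n, {w | w (i + 1) ∈ F (w i)}) ∩ ⋂ i ≤ n, {w | w i ∈ C i}
  have hS_closed (n : ℕ) : IsClosed (S n) :=
    ((isClosed_eq (continuous_apply 0) continuous_const).inter
      (isClosed_biInter fun i _ => (hFusc.isClosed_graph hFcpt).preimage
        (f := fun w : ℕ → X => (w i, w (i + 1))) (by fun_prop))).inter
      (isClosed_biInter fun i _ => (hC i).preimage (continuous_apply i))
  have hS_nonempty (n : ℕ) : (S n).Nonempty := by
    obtain ⟨w, hw0, hwF, hwC⟩ := exists_segment_of_mem_tupleDisc (mem_iInter.mp ha n)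
    exact ⟨w, ⟨hw0, mem_iInter₂.mpr hwF⟩, mem_iInter₂.mpr hwC⟩
  have hS_succ (n : ℕ) : S (n + 1) ⊆ S n :=
    inter_subset_inter
      (inter_subset_inter_right _ (iInter₂_mono' fun i hi => ⟨i, Nat.lt_succ_of_lt hi, le_rfl⟩))
      (iInter₂_mono' fun i hi => ⟨i, Nat.le_succ_of_le hi, le_rfl⟩)
  obtain ⟨w, hw⟩ := IsCompact.nonempty_iInter_of_sequence_nonempty_isCompact_isClosed S hS_succ
    hS_nonempty (hS_closed 0).isCompact hS_closed
  rw [mem_iInter] at hw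
  exact ⟨w, fun i => mem_iInter₂.mp (hw (i + 1)).1.2 i i.lt_succ_self, (hw 0).1.1,
    fun i => mem_iInter₂.mp (hw i).2 i le_rfl⟩

end Topological

section Uniform

variable {X : Type*} [UniformSpace X] [CompactSpace X] {F : X → Set X}

theorem exists_isFOC_closure_prod_subset {δ : SetRel X X} (hδ : δ ∈ 𝓤 X) :
    ∃ U : Set (Set X), IsFOC U ∧ ∀ W ∈ U, closure W ×ˢ closure W ⊆ δ := by
  obtain ⟨s, hs, hs_symm, hsδ⟩ := comp_symm_mem_uniformity_sets hδ
  obtain ⟨t, ht, ht_closed, hts⟩ := mem_uniformity_isClosed hs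
  obtain ⟨T, hT⟩ := isCompact_univ.elim_finite_subcover (fun x => ball x (interior t))
    (fun x => isOpen_ball x isOpen_interior)
    (fun x _ => mem_iUnion.mpr ⟨x, mem_ball_self x (interior_mem_uniformity ht)⟩)
  refine ⟨(fun x => ball x (interior t)) '' T, ⟨T.finite_toSet.image _, ?_, ?_⟩, ?_⟩
  · rintro _ ⟨x, -, rfl⟩
    exact isOpen_ball x isOpen_interior
  · rw [sUnion_image]
    exact univ_subset_iff.mp hT
  · rintro _ ⟨c, -, rfl⟩ ⟨x, y⟩ ⟨hx, hy⟩
    have hsub : closure (ball c (interior t)) ⊆ ball c s :=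
      (closure_minimal (ball_mono interior_subset c) (isClosed_ball c ht_closed)).trans
        (ball_mono hts c)
    exact hsδ ⟨c, hs_symm.symm _ _ (hsub hx), hsub hy⟩

theorem ExpansiveSV.exists_isGenerator [T2Space X] (hF : ExpansiveSV F) (hFusc : USCSV F)
    (hFcpt : ∀ x, IsCompact (F x)) : ∃ U : Set (Set X), IsGenerator F U := by
  obtain ⟨δ, hδ, hexp⟩ := hF
  obtain ⟨U, hU, hUδ⟩ := exists_isFOC_closure_prod_subset hδ
  refine ⟨U, hU, fun Us hUs a ha b hb => ?_⟩
  obtain ⟨x, hx, rfl, hxU⟩ := exists_orbit_of_mem_seqDisc hFusc hFcpt (fun _ => isClosed_closure) ha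
  obtain ⟨y, hy, rfl, hyU⟩ := exists_orbit_of_mem_seqDisc hFusc hFcpt (fun _ => isClosed_closure) hb
  exact hexp x y hx hy fun i => hUδ _ (hUs i) ⟨hxU i, hyU i⟩

theorem IsWeakGenerator.expansiveSV {U : Set (Set X)} (hU : IsWeakGenerator F U) :
    ExpansiveSV F := by
  obtain ⟨⟨-, hU_open, hU_cover⟩, hU_disc⟩ := hU
  obtain ⟨V, hV, hVU⟩ := lebesgue_number_lemma_sUnion isCompact_univ hU_open hU_cover.ge
  refine ⟨V, hV, fun x y hx hy hxy => ?_⟩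
  choose W hWU hxW using fun i => hVU (x i) (mem_univ _)
  exact hU_disc W hWU (hx.zero_mem_seqDisc fun i => hxW i (mem_ball_self _ hV))
    (hy.zero_mem_seqDisc fun i => hxW i (hxy i))

end Uniform

theorem expansiveSV_iff_generator_iff_weakGenerator_general
    {X : Type*} [UniformSpace X] [CompactSpace X] [T2Space X]
    (F : X → Set X)
    (hFcpt : ∀ x, IsCompact (F x)) (hFusc : USCSV F) :
    (ExpansiveSV F ↔ ∃ U : Set (Set X), IsGenerator F U) ∧
    ((∃ U : Set (Set X), IsGenerator F U) ↔ ∃ U : Set (Set X), IsWeakGenerator F U) := by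
  have weak_expansive : (∃ U, IsWeakGenerator F U) → ExpansiveSV F :=
    fun ⟨_, hU⟩ => hU.expansiveSV
  have gen_weak : (∃ U, IsGenerator F U) → ∃ U, IsWeakGenerator F U :=
    fun ⟨U, hU⟩ => ⟨U, hU.isWeakGenerator⟩
  have expansive_gen : ExpansiveSV F → ∃ U, IsGenerator F U :=
    fun h => h.exists_isGenerator hFusc hFcpt
  exact ⟨⟨expansive_gen, weak_expansive ∘ gen_weak⟩, ⟨gen_weak, expansive_gen ∘ weak_expansive⟩⟩

/-- Theorem 3.16: on a compact Hausdorff space, an usc set-valued map is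
expansive iff it has a generator iff it has a weak generator. -/
theorem expansiveSV_iff_generator_iff_weakGenerator
    {X : Type*} [UniformSpace X] [CompactSpace X] [T2Space X]
    (F : X → Set X)
    (hFne : ∀ x, (F x).Nonempty) (hFcpt : ∀ x, IsCompact (F x)) (hFusc : USCSV F) :
    (ExpansiveSV F ↔ ∃ U : Set (Set X), IsGenerator F U) ∧
    ((∃ U : Set (Set X), IsGenerator F U) ↔ ∃ U : Set (Set X), IsWeakGenerator F U) :=
  expansiveSV_iff_generator_iff_weakGenerator_general F hFcpt hFusc
end

section
/- If a compact Hausdorff space X admits an expansive upper semicontinuous set-valued map F : X → 2^X, then X is metrizable. -/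
open Set Filter Metric Topology

section Aux

/-- In a compact Hausdorff space, the neighborhood filter of a closed Gδ set is
countably generated. -/
theorem aux_ctblGen_nhdsSet {Z : Type*} [TopologicalSpace Z] [CompactSpace Z] [T2Space Z]
    {K : Set Z} (hKc : IsClosed K) (hGδ : IsGδ K) :
    (𝓝ˢ K).IsCountablyGenerated := by
  obtain ⟨U, hUo, hUK⟩ := isGδ_iff_eq_iInter_nat.mp hGδ
  have key : ∀ p : Set Z × ℕ, ∃ W : Set Z, IsOpen p.1 → K ⊆ p.1 →
      IsOpen W ∧ K ⊆ W ∧ closure W ⊆ p.1 ∩ U p.2 := by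
    intro p
    by_cases h : IsOpen p.1 ∧ K ⊆ p.1
    · obtain ⟨W, h1, h2, h3⟩ := normal_exists_closure_subset hKc (h.1.inter (hUo p.2))
        (subset_inter h.2 (hUK ▸ iInter_subset U p.2))
      exact ⟨W, fun _ _ => ⟨h1, h2, h3⟩⟩
    · exact ⟨∅, fun hV hKV => absurd ⟨hV, hKV⟩ h⟩
  choose W hW using key
  let g : ℕ → Set Z := fun n => Nat.rec Set.univ (fun n V => W (V, n)) n
  have hg0 : ∀ n, IsOpen (g n) ∧ K ⊆ g n := by
    intro n
    induction n with
    | zero => exact ⟨isOpen_univ, subset_univ K⟩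
    | succ n ih =>
      obtain ⟨h1, h2, _⟩ := hW (g n, n) ih.1 ih.2
      exact ⟨h1, h2⟩
  have hgcl : ∀ n, closure (g (n + 1)) ⊆ g n ∩ U n := fun n =>
    (hW (g n, n) (hg0 n).1 (hg0 n).2).2.2
  have hganti : ∀ m n, m ≤ n → g n ⊆ g m := by
    intro m n hmn
    induction n with
    | zero => simpa [Nat.le_zero.mp hmn] using subset_rfl
    | succ n ih =>
      rcases Nat.lt_or_ge m (n + 1) with h | h
      · exact (subset_closure.trans (hgcl n)).trans
          ((inter_subset_left).trans (ih (Nat.lt_succ_iff.mp h)))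
      · have : m = n + 1 := le_antisymm hmn h
        simp [this]
  have hbasis : (𝓝ˢ K).HasBasis (fun _ : ℕ => True) g := by
    constructor
    intro t
    simp only [true_and]
    constructor
    · intro ht
      obtain ⟨V, hVo, hKV, hVt⟩ := mem_nhdsSet_iff_exists.mp ht
      have hempty : (Set.univ : Set Z) ∩ ⋂ n, closure (g (n + 1)) ∩ Vᶜ = ∅ := by
        rw [univ_inter, eq_empty_iff_forall_notMem]
        intro x hx
        rw [mem_iInter] at hx
        have hxK : x ∈ K := by
          rw [hUK, mem_iInter]
          exact fun n => (hgcl n (hx n).1).2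
        exact (hx 0).2 (hKV hxK)
      obtain ⟨s, hs⟩ := isCompact_univ.elim_finite_subfamily_closed
        (fun n => closure (g (n + 1)) ∩ Vᶜ)
        (fun n => isClosed_closure.inter hVo.isClosed_compl) hempty
      set N := s.sup id with hN
      refine ⟨N + 1, ?_⟩
      have hsubV : closure (g (N + 1)) ⊆ V := by
        intro x hx
        by_contra hxV
        have : x ∈ (Set.univ : Set Z) ∩ ⋂ i ∈ s, closure (g (i + 1)) ∩ Vᶜ := by
          refine ⟨trivial, ?_⟩
          rw [mem_iInter₂]
          intro i hi
          have hiN : i ≤ N := Finset.le_sup (f := id) hi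
          exact ⟨closure_mono (hganti (i + 1) (N + 1) (by omega)) hx, hxV⟩
        rw [hs] at this
        exact this
      exact (subset_closure.trans hsubV).trans hVt
    · rintro ⟨n, hsub⟩
      exact mem_of_superset (((hg0 n).1.mem_nhdsSet).mpr (hg0 n).2) hsub
  exact hbasis.isCountablyGenerated

/-- Šneĭder's theorem: a compact Hausdorff (uniform) space with Gδ diagonal is metrizable. -/
theorem aux_metrizable_of_isGδ_diagonal {Z : Type*} [UniformSpace Z] [CompactSpace Z]
    [T2Space Z] (h : IsGδ (Set.diagonal Z)) : TopologicalSpace.MetrizableSpace Z := by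
  haveI : (uniformity Z).IsCountablyGenerated := by
    rw [← nhdsSet_diagonal_eq_uniformity]
    exact aux_ctblGen_nhdsSet isClosed_diagonal h
  exact UniformSpace.metrizableSpace

/-- The graph of a usc compact-valued map on a Hausdorff space is closed. -/
theorem aux_graph_closed {X : Type*} [TopologicalSpace X] [T2Space X] [CompactSpace X]
    (F : X → Set X) (hFcpt : ∀ x, IsCompact (F x)) (hFusc : USCSV F) :
    IsClosed {p : X × X | p.2 ∈ F p.1} := by
  rw [← isOpen_compl_iff]
  rw [isOpen_iff_mem_nhds]
  rintro ⟨a, b⟩ hab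
  have hdis : Disjoint (F a) {b} := by
    simp only [disjoint_singleton_right]
    exact hab
  obtain ⟨Uu, Vv, hUo, hVo, hFU, hbV, hdisj⟩ :=
    NormalSpace.normal (F a) {b} (hFcpt a).isClosed isClosed_singleton hdis
  obtain ⟨Ww, hWo, haW, hWsub⟩ := hFusc a Uu hUo hFU
  have : Ww ×ˢ Vv ∈ 𝓝 (a, b) := prod_mem_nhds (hWo.mem_nhds haW) (hVo.mem_nhds (hbV rfl))
  refine mem_of_superset this ?_
  rintro ⟨y, z⟩ ⟨hy, hz⟩ hmem
  exact (disjoint_left.mp hdisj) (hWsub y hy hmem) hz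

/-- Every point starts an orbit. -/
theorem aux_orbit_exists {X : Type*} [TopologicalSpace X] (F : X → Set X)
    (hFne : ∀ x, (F x).Nonempty) (a : X) : ∃ z, IsSVOrbit F z ∧ z 0 = a :=
  ⟨fun n => Nat.rec a (fun _ b => (hFne b).some) n, fun i => (hFne _).some_mem, rfl⟩

/-- Shifts of orbits are orbits. -/
theorem aux_orbit_shift {X : Type*} [TopologicalSpace X] {F : X → Set X} {w : ℕ → X}
    (hw : IsSVOrbit F w) (k : ℕ) : IsSVOrbit F (fun i => w (k + i)) :=
  fun i => hw (k + i)

end Aux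

/-- a compact Hausdorff space admitting an expansive usc set-valued map
is metrizable. -/
theorem metrizable_of_expansiveSV
    {X : Type*} [UniformSpace X] [CompactSpace X] [T2Space X]
    (F : X → Set X)
    (hFne : ∀ x, (F x).Nonempty) (hFcpt : ∀ x, IsCompact (F x)) (hFusc : USCSV F)
    (hexp : ExpansiveSV F) :
    TopologicalSpace.MetrizableSpace X := by
  classical
  obtain ⟨δ, hδu, hδ⟩ := hexp
  obtain ⟨O, ⟨hOu, hOo⟩, hOδ⟩ := (uniformity_hasBasis_open (α := X)).mem_iff.mp hδu
  -- the orbit space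
  set Y : Set (ℕ → X) := svOrbitSet F with hYdef
  have hYc : IsClosed Y := by
    have hgraph := aux_graph_closed F hFcpt hFusc
    have : Y = ⋂ i : ℕ, (fun w : ℕ → X => (w i, w (i + 1))) ⁻¹' {p : X × X | p.2 ∈ F p.1} := by
      ext w
      simp only [hYdef, svOrbitSet, mem_setOf_eq, mem_iInter, mem_preimage]
    rw [this]
    exact isClosed_iInter fun i =>
      hgraph.preimage ((continuous_apply i).prodMk (continuous_apply (i + 1)))
  haveI : CompactSpace Y := isCompact_iff_compactSpace.mp hYc.isCompact
  -- the diagonal of the orbit space is Gδ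
  have hYorb : ∀ w : Y, IsSVOrbit F (w : ℕ → X) := fun w => w.2
  have hdY : IsGδ (Set.diagonal Y) := by
    have hdiag : Set.diagonal Y =
        ⋂ n : ℕ, {p : Y × Y | ((p.1 : ℕ → X) n, (p.2 : ℕ → X) n) ∈ O} := by
      apply Subset.antisymm
      · intro p hp
        rw [Set.mem_diagonal_iff] at hp
        rw [mem_iInter]
        intro n
        simp only [mem_setOf_eq, hp]
        exact refl_mem_uniformity hOu
      · intro p hp
        rw [mem_iInter] at hp
        rw [Set.mem_diagonal_iff]
        have : ∀ k, (p.1 : ℕ → X) k = (p.2 : ℕ → X) k := by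
          intro k
          exact hδ (fun i => (p.1 : ℕ → X) (k + i)) (fun i => (p.2 : ℕ → X) (k + i))
            (aux_orbit_shift (hYorb p.1) k) (aux_orbit_shift (hYorb p.2) k)
            (fun i => hOδ (hp (k + i)))
        exact Subtype.ext (funext this)
    rw [hdiag]
    refine IsGδ.iInter_of_isOpen fun n => ?_
    exact hOo.preimage (((continuous_apply n).comp
      (continuous_subtype_val.comp continuous_fst)).prodMk
      ((continuous_apply n).comp (continuous_subtype_val.comp continuous_snd)))
  -- hence the orbit space has countably generated uniformity
  haveI hYu : (uniformity Y).IsCountablyGenerated := by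
    rw [← nhdsSet_diagonal_eq_uniformity]
    exact aux_ctblGen_nhdsSet isClosed_diagonal hdY
  haveI : (uniformity (Y × Y)).IsCountablyGenerated := by
    rw [uniformity_prod_eq_comap_prod]
    infer_instance
  -- push the Gδ diagonal down to X
  set q : Y × Y → X × X := fun p => ((p.1 : ℕ → X) 0, (p.2 : ℕ → X) 0) with hqdef
  have hqcont : Continuous q := ((continuous_apply 0).comp
      (continuous_subtype_val.comp continuous_fst)).prodMk
      ((continuous_apply 0).comp (continuous_subtype_val.comp continuous_snd))
  have hqclosed : IsClosedMap q := hqcont.isClosedMap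
  have hqsurj : Function.Surjective q := by
    rintro ⟨a, b⟩
    obtain ⟨za, hza, hza0⟩ := aux_orbit_exists F hFne a
    obtain ⟨zb, hzb, hzb0⟩ := aux_orbit_exists F hFne b
    exact ⟨(⟨za, hza⟩, ⟨zb, hzb⟩), by simp [hqdef, hza0, hzb0]⟩
  have hRclosed : IsClosed (q ⁻¹' Set.diagonal X) := (isClosed_diagonal).preimage hqcont
  obtain ⟨G, hGo, hGeq⟩ := isGδ_iff_eq_iInter_nat.mp hRclosed.isGδ
  have hdX : Set.diagonal X = ⋂ n : ℕ, (q '' (G n)ᶜ)ᶜ := by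
    apply Subset.antisymm
    · intro x hx
      rw [mem_iInter]
      intro n
      rintro ⟨p, hpG, hpq⟩
      apply hpG
      have hpR : p ∈ q ⁻¹' Set.diagonal X := by
        rw [mem_preimage, hpq]
        exact hx
      rw [hGeq, mem_iInter] at hpR
      exact hpR n
    · intro x hx
      rw [mem_iInter] at hx
      obtain ⟨p, hpq⟩ := hqsurj x
      have hpG : ∀ n, p ∈ G n := by
        intro n
        by_contra hpGn
        exact hx n ⟨p, hpGn, hpq⟩
      have : p ∈ q ⁻¹' Set.diagonal X := by
        rw [hGeq, mem_iInter]
        exact hpG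
      rw [mem_preimage, hpq] at this
      exact this
  have hdXGδ : IsGδ (Set.diagonal X) := by
    rw [hdX]
    exact IsGδ.iInter_of_isOpen fun n =>
      isOpen_compl_iff.mpr (hqclosed _ (hGo n).isClosed_compl)
  exact aux_metrizable_of_isGδ_diagonal hdXGδ
end

section
/- Let F : X → 2^X be an upper semicontinuous set-valued map on a compact Hausdorff space X. Then F has the set-valued finite shadowing property if and only if F has the set-valued shadowing property. -/
open Set Filter Metric Topology

/-- The set-valued finite shadowing property: every finite `𝒱`-pseudo-orbit
`(x_0, …, x_n)` is `𝒰`-shadowed by a finite `F`-orbit `(z_0, …, z_n)`. -/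
def SVFiniteShadowing {X : Type*} [TopologicalSpace X] (F : X → Set X) : Prop :=
  ∀ U : Set (Set X), IsFOC U → ∃ V : Set (Set X), IsFOC V ∧
    ∀ n : ℕ, ∀ x : ℕ → X,
      (∀ i < n, ∃ W ∈ V, (F (x i) ∩ W).Nonempty ∧ x (i + 1) ∈ W) →
      ∃ z : ℕ → X, (∀ i < n, z (i + 1) ∈ F (z i)) ∧
        ∀ i ≤ n, ∃ W ∈ U, x i ∈ W ∧ z i ∈ W

section Aux

variable {X : Type*} [TopologicalSpace X]

/-- The graph of a usc compact-valued map is closed. -/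
lemma svGraph_closed [T2Space X] {F : X → Set X}
    (hFcpt : ∀ x, IsCompact (F x)) (hFusc : USCSV F) :
    IsClosed {p : X × X | p.2 ∈ F p.1} := by
  rw [← isOpen_compl_iff, isOpen_iff_mem_nhds]
  rintro ⟨a, b⟩ hab
  have hd : Disjoint (F a) {b} := by
    simp only [disjoint_singleton_right]; exact hab
  obtain ⟨Uo, Vo, hUo, hVo, hFU, hbV, hdUV⟩ :=
    SeparatedNhds.of_isCompact_isCompact (hFcpt a) isCompact_singleton hd
  obtain ⟨V, hVop, haV, hV⟩ := hFusc a Uo hUo hFU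
  have : V ×ˢ Vo ∈ 𝓝 (a, b) :=
    prod_mem_nhds (hVop.mem_nhds haV) (hVo.mem_nhds (hbV rfl))
  refine Filter.mem_of_superset this ?_
  rintro ⟨p, q⟩ ⟨hp, hq⟩ hmem
  exact absurd hmem (fun h => (disjoint_left.1 hdUV) (hV p hp h) hq)

/-- Shrinking lemma for finite open covers in a normal space. -/
lemma svShrink [NormalSpace X] {U : Set (Set X)} (hU : IsFOC U) :
    ∃ U' : Set (Set X), IsFOC U' ∧ ∀ W' ∈ U', ∃ W ∈ U, closure W' ⊆ W := by
  haveI : Finite U := hU.1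
  obtain ⟨v, hcov, hop, hcl⟩ :=
    exists_subset_iUnion_closure_subset (u := fun W : U => (W : Set X)) (s := univ)
      isClosed_univ (fun W => hU.2.1 W W.2) (fun x _ => Set.toFinite _)
      (by rw [← sUnion_eq_iUnion, hU.2.2])
  refine ⟨Set.range v, ⟨Set.finite_range v, ?_, ?_⟩, ?_⟩
  · rintro _ ⟨i, rfl⟩; exact hop i
  · rw [sUnion_range]; exact eq_univ_of_univ_subset hcov
  · rintro _ ⟨i, rfl⟩; exact ⟨i, i.2, hcl i⟩

end Aux


/-- for an usc set-valued map on a compact Hausdorff space, the set-valued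
finite shadowing property is equivalent to the set-valued shadowing property. -/
theorem svFiniteShadowing_iff_svShadowing
    {X : Type*} [TopologicalSpace X] [CompactSpace X] [T2Space X]
    (F : X → Set X)
    (hFne : ∀ x, (F x).Nonempty) (hFcpt : ∀ x, IsCompact (F x)) (hFusc : USCSV F) :
    SVFiniteShadowing F ↔ SVShadowing F := by
  constructor
  · -- finite shadowing → shadowing
    intro hfin U hU
    obtain ⟨U', hU', hsub⟩ := svShrink hU
    obtain ⟨V, hV, hVsh⟩ := hfin U' hU'
    refine ⟨V, hV, ?_⟩
    intro x hx
    have h1 : ∀ n, ∃ z : ℕ → X, (∀ i < n, z (i + 1) ∈ F (z i)) ∧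
        ∀ i ≤ n, ∃ W ∈ U', x i ∈ W ∧ z i ∈ W :=
      fun n => hVsh n x (fun i _ => hx i)
    choose zs hzs1 hzs2 using h1
    set 𝒰 : Ultrafilter ℕ := Ultrafilter.of atTop with h𝒰def
    have h𝒰 : (𝒰 : Filter ℕ) ≤ atTop := Ultrafilter.of_le _
    have hlim : ∀ i, ∃ p : X, Tendsto (fun n => zs n i) (𝒰 : Filter ℕ) (𝓝 p) := by
      intro i
      obtain ⟨p, -, hp⟩ := isCompact_univ.ultrafilter_le_nhds
        (𝒰.map (fun n => zs n i)) (by simp)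
      exact ⟨p, by rwa [Ultrafilter.coe_map] at hp⟩
    choose z hz using hlim
    have hgraph := svGraph_closed hFcpt hFusc
    refine ⟨z, ?_, ?_⟩
    · intro i
      have hev : ∀ᶠ n in (𝒰 : Filter ℕ),
          ((fun n => (zs n i, zs n (i + 1))) n) ∈ {p : X × X | p.2 ∈ F p.1} := by
        apply Eventually.filter_mono h𝒰
        filter_upwards [eventually_ge_atTop (i + 1)] with n hn
        exact hzs1 n i (by omega)
      exact hgraph.mem_of_tendsto (((hz i).prodMk_nhds (hz (i + 1)))) hev
    · intro i
      have hmem : (⋃ W ∈ U', {n | x i ∈ W ∧ zs n i ∈ W}) ∈ (𝒰 : Filter ℕ) := by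
        apply Filter.mem_of_superset (h𝒰 (eventually_ge_atTop i))
        intro n hn
        obtain ⟨W, hW, hxi, hzn⟩ := hzs2 n i hn
        exact mem_biUnion hW ⟨hxi, hzn⟩
      obtain ⟨W, hWU', hWmem⟩ := (Ultrafilter.finite_biUnion_mem_iff hU'.1).1 hmem
      obtain ⟨W2, hW2, hclW⟩ := hsub W hWU'
      obtain ⟨m, hm⟩ := Filter.nonempty_of_mem hWmem
      refine ⟨W2, hW2, hclW (subset_closure hm.1), ?_⟩
      refine hclW (mem_closure_of_frequently_of_tendsto ?_ (hz i))
      have hev : ∀ᶠ n in (𝒰 : Filter ℕ), zs n i ∈ W :=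
        Filter.mem_of_superset (Ultrafilter.mem_coe.mpr hWmem) (fun n h => h.2)
      exact hev.frequently
  · -- shadowing → finite shadowing
    intro hsh U hU
    obtain ⟨V, hV, hVsh⟩ := hsh U hU
    refine ⟨V, hV, ?_⟩
    intro n x hx
    set f : X → X := fun a => (hFne a).choose with hfdef
    have hf : ∀ a, f a ∈ F a := fun a => (hFne a).choose_spec
    set x' : ℕ → X := fun i => if i < n then x i else f^[i - n] (x n) with hx'def
    have hx'eq : ∀ i ≤ n, x' i = x i := by
      intro i hi
      rcases lt_or_eq_of_le hi with h | h
      · simp [hx'def, h]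
      · subst h; simp [hx'def]
    have hx'po : IsSVPseudoOrbit F V x' := by
      intro i
      by_cases h : i < n
      · obtain ⟨W, hW, hne, hmem⟩ := hx i h
        refine ⟨W, hW, ?_, ?_⟩
        · rw [hx'eq i h.le]; exact hne
        · rw [hx'eq (i + 1) h]; exact hmem
      · push_neg at h
        have hstep : x' (i + 1) ∈ F (x' i) := by
          have h1 : x' i = f^[i - n] (x n) := by simp [hx'def, not_lt.2 h]
          have h2 : x' (i + 1) = f^[i + 1 - n] (x n) := by
            simp [hx'def, not_lt.2 (le_trans h (Nat.le_succ i))]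
          have h3 : i + 1 - n = (i - n) + 1 := by omega
          rw [h1, h2, h3, Function.iterate_succ_apply']
          exact hf _
        have hcov : x' (i + 1) ∈ ⋃₀ V := by rw [hV.2.2]; trivial
        obtain ⟨W, hW, hmem⟩ := hcov
        exact ⟨W, hW, ⟨x' (i + 1), hstep, hmem⟩, hmem⟩
    obtain ⟨zz, hzz1, hzz2⟩ := hVsh x' hx'po
    refine ⟨zz, fun i _ => hzz1 i, fun i hi => ?_⟩
    obtain ⟨W, hW, h1, h2⟩ := hzz2 i
    exact ⟨W, hW, by rwa [hx'eq i hi] at h1, h2⟩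
end

section
/- Define f : [0,2] → [0,2] by f(x) = 2x for 0 ≤ x < 1, f(1) = 0, and f(x) = 2x − 2 for 1 < x ≤ 2 (a single-valued but non-continuous map, with non-closed graph). Then f has the finite shadowing property but does not have the shadowing property. Precisely: (a) for every ε > 0 there is δ > 0 such that for every finite δ-pseudo-orbit (x_0, …, x_n) (meaning |f(x_i) − x_{i+1}| < δ for 0 ≤ i < n) there exists z ∈ [0,2] with |f^j(z) − x_j| < ε for all 0 ≤ j ≤ n; (b) there exists ε > 0 such that for every δ > 0 there is an infinite δ-pseudo-orbit (x_i)_{i∈ℕ} (|f(x_i) − x_{i+1}| < δ for all i) which is not ε-shadowed by any f-orbit, i.e. there is no z ∈ [0,2] with |f^i(z) − x_i| < ε for all i ∈ ℕ. -/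
open Set

/-- The doubling-type map `f` on `[0,2]`: `f x = 2x` for `x < 1`, `f 1 = 0`,
`f x = 2x - 2` for `x > 1`. -/
noncomputable def fDoubling (x : ℝ) : ℝ :=
  if x < 1 then 2 * x else if x = 1 then 0 else 2 * x - 2

lemma fD_lt {x : ℝ} (h : x < 1) : fDoubling x = 2 * x := by
  simp [fDoubling, h]

lemma fD_ge {x : ℝ} (h : 1 ≤ x) : fDoubling x = 2 * x - 2 := by
  unfold fDoubling
  rcases lt_or_eq_of_le h with h1 | h1
  · rw [if_neg (by linarith), if_neg (by linarith)]
  · rw [if_neg (by linarith), if_pos h1.symm]; linarith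

/-- Pullback of a target `t` through the branch of `fDoubling` adapted to `x`. -/
noncomputable def fPull (x t : ℝ) : ℝ := if x < 1 then t / 2 else t / 2 + 1

lemma fPull_mem {t : ℝ} (x : ℝ) (h0 : 0 ≤ t) (h2 : t < 2) :
    0 ≤ fPull x t ∧ fPull x t < 2 := by
  unfold fPull
  split <;> constructor <;> linarith

lemma fD_fPull {t : ℝ} (x : ℝ) (h0 : 0 ≤ t) (h2 : t < 2) :
    fDoubling (fPull x t) = t := by
  unfold fPull
  split
  · rw [fD_lt (by linarith)]; ring
  · rw [fD_ge (by linarith)]; ring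

lemma fPull_dist (x t : ℝ) : |fPull x t - x| = |t - fDoubling x| / 2 := by
  unfold fPull
  split_ifs with h
  · rw [fD_lt h, show t / 2 - x = (t - 2 * x) / 2 by ring, abs_div]
    norm_num
  · rw [fD_ge (le_of_not_gt h), show t / 2 + 1 - x = (t - (2 * x - 2)) / 2 by ring, abs_div]
    norm_num

/-- the (discontinuous, single-valued) map `fDoubling` on `[0,2]` has the
finite shadowing property but not the shadowing property. -/
theorem fDoubling_finiteShadowing_not_shadowing :
    (∀ ε > (0 : ℝ), ∃ δ > (0 : ℝ), ∀ n : ℕ, ∀ x : ℕ → ℝ,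
      (∀ i ≤ n, x i ∈ Set.Icc (0 : ℝ) 2) →
      (∀ i < n, |fDoubling (x i) - x (i + 1)| < δ) →
      ∃ z ∈ Set.Icc (0 : ℝ) 2, ∀ j ≤ n, |fDoubling^[j] z - x j| < ε) ∧
    (∃ ε > (0 : ℝ), ∀ δ > (0 : ℝ), ∃ x : ℕ → ℝ,
      (∀ i, x i ∈ Set.Icc (0 : ℝ) 2) ∧
      (∀ i, |fDoubling (x i) - x (i + 1)| < δ) ∧
      ∀ z ∈ Set.Icc (0 : ℝ) 2, ∃ i : ℕ, ε ≤ |fDoubling^[i] z - x i|) := by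
  constructor
  · -- finite shadowing
    intro ε hε
    set δ : ℝ := min (ε / 4) (1 / 2) with hδdef
    have hδ0 : 0 < δ := lt_min (by linarith) (by norm_num)
    have hδε : δ ≤ ε / 4 := min_le_left _ _
    have hδhalf : δ ≤ 1 / 2 := min_le_right _ _
    refine ⟨δ, hδ0, ?_⟩
    intro n x hx hpo
    -- backward pullback sequence; g k approximates x (n - k)
    let g : ℕ → ℝ := fun k => Nat.rec (min (x n) (2 - δ)) (fun k ih => fPull (x (n - (k + 1))) ih) k
    have hg0 : g 0 = min (x n) (2 - δ) := rfl
    have hgs : ∀ k, g (k + 1) = fPull (x (n - (k + 1))) (g k) := fun k => rfl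
    have hxn := hx n le_rfl
    have hmem : ∀ k, 0 ≤ g k ∧ g k < 2 := by
      intro k
      induction k with
      | zero =>
        constructor
        · exact le_min hxn.1 (by linarith)
        · exact lt_of_le_of_lt (min_le_right _ _) (by linarith)
      | succ k ih =>
        rw [hgs]
        exact fPull_mem _ ih.1 ih.2
    have herr : ∀ k ≤ n, |g k - x (n - k)| < 2 * δ := by
      intro k
      induction k with
      | zero =>
        intro _
        simp only [Nat.sub_zero, hg0]
        rw [abs_sub_lt_iff]
        rcases le_total (x n) (2 - δ) with h | h
        · rw [min_eq_left h]; constructor <;> linarith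
        · rw [min_eq_right h]; constructor <;> [linarith; linarith [hxn.2]]
      | succ k ih =>
        intro hk
        have hk' : k ≤ n := Nat.le_of_succ_le hk
        have ih' := ih hk'
        have hj : n - (k + 1) < n := by omega
        have hjx : n - (k + 1) + 1 = n - k := by omega
        rw [hgs, fPull_dist]
        have hpo' := hpo (n - (k + 1)) hj
        rw [hjx] at hpo'
        have htri : |g k - fDoubling (x (n - (k + 1)))| ≤
            |g k - x (n - k)| + |x (n - k) - fDoubling (x (n - (k + 1)))| :=
          abs_sub_le _ _ _
        rw [abs_sub_comm (x (n - k))] at htri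
        have : |g k - fDoubling (x (n - (k + 1)))| < 3 * δ := by linarith
        linarith
    have horb : ∀ j ≤ n, fDoubling^[j] (g n) = g (n - j) := by
      intro j
      induction j with
      | zero => intro _; rfl
      | succ j ih =>
        intro hj
        have hj' : j ≤ n := Nat.le_of_succ_le hj
        rw [Function.iterate_succ_apply', ih hj']
        have h1 : n - j = (n - (j + 1)) + 1 := by omega
        rw [h1, hgs]
        have h2 : n - (n - (j + 1) + 1) = j + 1 - 1 := by omega
        have hmm := hmem (n - (j + 1))
        rw [fD_fPull _ hmm.1 hmm.2]
    refine ⟨g n, ⟨(hmem n).1, le_of_lt (hmem n).2⟩, ?_⟩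
    intro j hj
    rw [horb j hj]
    have h1 : n - (n - j) = j := by omega
    have := herr (n - j) (Nat.sub_le _ _)
    rw [h1] at this
    linarith
  · -- no shadowing
    refine ⟨1 / 4, by norm_num, ?_⟩
    intro δ hδ
    set η : ℝ := min (δ / 2) (1 / 8) with hηdef
    have hη0 : 0 < η := lt_min (by linarith) (by norm_num)
    have hη8 : η ≤ 1 / 8 := min_le_right _ _
    have hηδ : η < δ := lt_of_le_of_lt (min_le_left _ _) (by linarith)
    refine ⟨fun i => Nat.rec (1 - η) (fun _ _ => 2 - η) i, ?_, ?_, ?_⟩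
    · intro i
      cases i with
      | zero =>
        show (1 - η) ∈ Set.Icc (0 : ℝ) 2
        exact ⟨by linarith, by linarith⟩
      | succ k =>
        show (2 - η) ∈ Set.Icc (0 : ℝ) 2
        exact ⟨by linarith, by linarith⟩
    · intro i
      cases i with
      | zero =>
        show |fDoubling (1 - η) - (2 - η)| < δ
        rw [fD_lt (by linarith)]
        rw [show 2 * (1 - η) - (2 - η) = -η by ring, abs_neg, abs_of_pos hη0]
        linarith
      | succ k =>
        show |fDoubling (2 - η) - (2 - η)| < δ
        rw [fD_ge (by linarith)]
        rw [show 2 * (2 - η) - 2 - (2 - η) = -η by ring, abs_neg, abs_of_pos hη0]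
        linarith
    · intro z hz
      by_contra hcon
      push_neg at hcon
      have h0 : |z - (1 - η)| < 1 / 4 := by
        have := hcon 0
        simpa using this
      rw [abs_sub_lt_iff] at h0
      have hz2 : z ≠ 2 := by
        intro h
        rw [h] at h0
        linarith [h0.1]
      have hfz : fDoubling z < 2 := by
        rcases lt_or_ge z 1 with h | h
        · rw [fD_lt h]; linarith
        · rw [fD_ge h]
          have : z < 2 := lt_of_le_of_ne hz.2 hz2
          linarith
      have hgt : ∀ k : ℕ, 13 / 8 < fDoubling^[k + 1] z := by
        intro k
        have h1 : |fDoubling^[k + 1] z - (2 - η)| < 1 / 4 := hcon (k + 1)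
        rw [abs_sub_lt_iff] at h1
        linarith [h1.2]
      have key : ∀ i : ℕ, 2 - fDoubling^[i + 1] z = 2 ^ i * (2 - fDoubling z) := by
        intro i
        induction i with
        | zero => simp [Function.iterate_one]
        | succ i ih =>
          rw [Function.iterate_succ_apply']
          have hy : 13 / 8 < fDoubling^[i + 1] z := hgt i
          rw [fD_ge (by linarith)]
          rw [show 2 - (2 * fDoubling^[i + 1] z - 2) = 2 * (2 - fDoubling^[i + 1] z) by ring,
            ih]
          ring
      have ha0 : 0 < 2 - fDoubling z := by linarith
      obtain ⟨m, hm⟩ := pow_unbounded_of_one_lt ((1 / 2) / (2 - fDoubling z))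
        (by norm_num : (1 : ℝ) < 2)
      rw [div_lt_iff₀ ha0] at hm
      have h1 := key m
      have h2 := hgt m
      linarith
end

section
/- Let (X, F) be an expansive upper semicontinuous set-valued system on a compact totally disconnected Hausdorff space X. If F has the set-valued shadowing property, then the orbit system (Orb_F(X), σ_F) is conjugate, as a single-valued dynamical system, to a subshift of finite type. -/
open Set Filter Metric Topology

/-- The word `u` occurs in the sequence `w` at position `k`. -/
def OccursIn {S : Type*} (u : List S) (w : ℕ → S) (k : ℕ) : Prop :=
  ∀ j : Fin u.length, w (k + (j : ℕ)) = u.get j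

/-- The subshift of finite type determined by the finite forbidden word set `W`. -/
def SFT {S : Type*} (W : Set (List S)) : Set (ℕ → S) :=
  {w | ∀ u ∈ W, ∀ k : ℕ, ¬ OccursIn u w k}

/-!
Choose a clopen partition into `δ`-small pieces, `δ` an expansivity entourage, and code each
orbit by its itinerary through the pieces; by expansiveness the coding is injective. Since the
orbit space is compact, there is `n` such that orbits whose itineraries agree on the first
`n + 1` letters start in a common member of the open cover that shadowing assigns to the
partition. Hence a sequence all of whose blocks of length `n + 2` occur in orbit itineraries is
the itinerary of a pseudo-orbit glued from orbit pieces, and the orbit shadowing it has exactly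
this itinerary: the orbit itineraries form the subshift forbidding the finitely many blocks of
length `n + 2` that occur in no orbit itinerary.
-/

theorem exists_continuous_nat_fibers_subset {X : Type*} [UniformSpace X] [CompactSpace X]
    [T2Space X] [TotallyDisconnectedSpace X] {δ : Set (X × X)} (hδ : δ ∈ uniformity X) :
    ∃ c : X → ℕ, Continuous c ∧ ∀ x y, c x = c y → (x, y) ∈ δ := by
  obtain ⟨t, ht, htsymm, htδ⟩ := comp_symm_mem_uniformity_sets hδ
  rw [← nhdsSet_diagonal_eq_uniformity] at ht
  -- `g` factors the identity through `Fin n` up to `t`, so its fibres are `t ○ t`-small.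
  obtain ⟨n, g, r, hg, hgr⟩ :=
    (ContinuousMap.id X).exists_finite_approximation_of_mem_nhds_diagonal ht
  refine ⟨fun x => g x, continuous_of_discreteTopology.comp hg, fun x y hxy => ?_⟩
  have hgxy : g x = g y := Fin.ext hxy
  exact htδ (SetRel.mem_comp.2 ⟨r (g x), hgr x, hgxy ▸ SetRel.symm t (hgr y)⟩)

section Orbits

variable {X : Type*} {F : X → Set X}

theorem isClosed_graph_of_USCSV [TopologicalSpace X] [T2Space X] (hFcpt : ∀ x, IsCompact (F x))
    (hFusc : USCSV F) :
    IsClosed {p : X × X | p.2 ∈ F p.1} := by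
  refine isOpen_compl_iff.1 (isOpen_iff_forall_mem_open.2 ?_)
  rintro ⟨x, y⟩ (hxy : y ∉ F x)
  obtain ⟨U, V, hU, hV, hFU, hyV, hUV⟩ :=
    SeparatedNhds.of_isCompact_isCompact (hFcpt x) isCompact_singleton
      (disjoint_singleton_right.2 hxy)
  obtain ⟨N, hN, hxN, hNU⟩ := hFusc x U hU hFU
  refine ⟨N ×ˢ V, ?_, hN.prod hV, hxN, hyV rfl⟩
  rintro ⟨a, b⟩ ⟨ha, hb⟩ (hab : b ∈ F a)
  exact hUV.ne_of_mem (hNU a ha hab) hb rfl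

theorem isClosed_svOrbitSet [TopologicalSpace X] (hgr : IsClosed {p : X × X | p.2 ∈ F p.1}) :
    IsClosed (svOrbitSet F) := by
  have : svOrbitSet F = ⋂ i, (fun w : ℕ → X => (w i, w (i + 1))) ⁻¹' {p | p.2 ∈ F p.1} := by
    ext w
    simp [svOrbitSet]
  rw [this]
  exact isClosed_iInter fun i => hgr.preimage (by fun_prop)

theorem shift_mem_svOrbitSet {w : ℕ → X} (hw : w ∈ svOrbitSet F) (k : ℕ) :
    (fun i => w (k + i)) ∈ svOrbitSet F :=
  fun i => hw (k + i)

end Orbits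

section Coding

variable {X A : Type*} {F : X → Set X} (c : X → A)

theorem itinerary_injOn_svOrbitSet {δ : Set (X × X)}
    (hδ : ∀ x y : ℕ → X, IsSVOrbit F x → IsSVOrbit F y → (∀ i, (x i, y i) ∈ δ) → x 0 = y 0)
    (hc : ∀ x y, c x = c y → (x, y) ∈ δ) :
    InjOn (fun w => c ∘ w) (svOrbitSet F) := by
  intro x hx y hy hxy
  funext k
  simpa using hδ _ _ (shift_mem_svOrbitSet hx k) (shift_mem_svOrbitSet hy k)
    fun i => hc _ _ (congrFun hxy (k + i))

theorem exists_mem_cover_of_itinerary_eqOn [TopologicalSpace X] [CompactSpace X]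
    [TopologicalSpace A] [DiscreteTopology A] (hO : IsClosed (svOrbitSet F)) (hc : Continuous c)
    (hinj : InjOn (fun w => c ∘ w) (svOrbitSet F))
    {V : Set (Set X)} (hVopen : ∀ W ∈ V, IsOpen W) (hVcover : ⋃₀ V = univ) :
    ∃ n, ∀ x ∈ svOrbitSet F, ∀ y ∈ svOrbitSet F, (∀ i ≤ n, c (x i) = c (y i)) →
      ∃ W ∈ V, x 0 ∈ W ∧ y 0 ∈ W := by
  let K : ℕ → Set ((ℕ → X) × (ℕ → X)) := fun n =>
    svOrbitSet F ×ˢ svOrbitSet F ∩ {p | ∀ i ≤ n, c (p.1 i) = c (p.2 i)}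
  have hK : Antitone K := fun m n hmn p hp => ⟨hp.1, fun i hi => hp.2 i (hi.trans hmn)⟩
  have hKclosed : ∀ n, IsClosed (K n) := fun n => by
    refine (hO.prod hO).inter ?_
    simp only [ofPred_forall]
    exact isClosed_biInter fun i _ => isClosed_eq (by fun_prop) (by fun_prop)
  -- On `⋂ n, K n` both components are the same orbit, so the set below is a neighbourhood of it.
  obtain ⟨n, hn⟩ := exists_subset_nhds_of_isCompact' hK.directed_ge
    (fun n => (hKclosed n).isCompact) hKclosed
    (U := {p | ∃ W ∈ V, p.1 0 ∈ W ∧ p.2 0 ∈ W}) <| by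
      rintro ⟨x, y⟩ hxy
      obtain rfl : x = y := hinj (mem_iInter.1 hxy 0).1.1 (mem_iInter.1 hxy 0).1.2
        (funext fun i => (mem_iInter.1 hxy i).2 i le_rfl)
      obtain ⟨W, hW, hxW⟩ := mem_sUnion.1 (hVcover ▸ mem_univ (x 0))
      have hWW : IsOpen ((fun p : (ℕ → X) × (ℕ → X) => (p.1 0, p.2 0)) ⁻¹' W ×ˢ W) :=
        ((hVopen W hW).prod (hVopen W hW)).preimage (by fun_prop)
      exact mem_of_superset (hWW.mem_nhds ⟨hxW, hxW⟩) fun p hp => ⟨W, hW, hp⟩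
  exact ⟨n, fun x hx y hy hxy => hn (show (x, y) ∈ K n from ⟨⟨hx, hy⟩, hxy⟩)⟩

def fiberCover (c : X → A) : Set (Set X) := range fun a => c ⁻¹' {a}

theorem isFOC_fiberCover [TopologicalSpace X] [TopologicalSpace A] [DiscreteTopology A] [Finite A]
    (hc : Continuous c) : IsFOC (fiberCover c) := by
  refine ⟨finite_range _, ?_, ?_⟩
  · rintro _ ⟨a, rfl⟩
    exact (isOpen_discrete _).preimage hc
  · exact eq_univ_of_forall fun x => mem_sUnion.2 ⟨_, ⟨c x, rfl⟩, rfl⟩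

theorem itinerary_eq_of_shadowedBy_fiberCover {x z : ℕ → X}
    (h : ShadowedBy (fiberCover c) x z) (i : ℕ) : c (x i) = c (z i) := by
  obtain ⟨_, ⟨a, rfl⟩, hx, hz⟩ := h i
  exact hx.trans hz.symm

def orbitWords (F : X → Set X) (c : X → A) : Set (List A) :=
  {u | ∃ w ∈ svOrbitSet F, OccursIn u (c ∘ w) 0}

def forbiddenWords (F : X → Set X) (c : X → A) (L : ℕ) : Set (List A) :=
  {u | u.length = L ∧ u ∉ orbitWords F c}

theorem forbiddenWords_finite [Finite A] (L : ℕ) : (forbiddenWords F c L).Finite :=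
  (List.finite_length_eq A L).subset fun _ hu => hu.1

theorem itinerary_mem_SFT {w : ℕ → X} (hw : w ∈ svOrbitSet F) (L : ℕ) :
    c ∘ w ∈ SFT (forbiddenWords F c L) := by
  rintro u ⟨-, hu⟩ k hk
  exact hu ⟨_, shift_mem_svOrbitSet hw k, fun j => by simpa using hk j⟩

theorem exists_orbit_of_mem_SFT {L : ℕ} {s : ℕ → A} (hs : s ∈ SFT (forbiddenWords F c L))
    (k : ℕ) : ∃ w ∈ svOrbitSet F, ∀ j < L, c (w j) = s (k + j) := by
  set u := List.ofFn fun j : Fin L => s (k + j)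
  have hu : u ∈ orbitWords F c := by
    by_contra h
    exact hs u ⟨List.length_ofFn, h⟩ k fun j => by simp [u]
  obtain ⟨w, hw, hwu⟩ := hu
  exact ⟨w, hw, fun j hj => by simpa [u] using hwu ⟨j, by simpa [u] using hj⟩⟩

theorem exists_orbit_itinerary_eq_of_mem_SFT [TopologicalSpace X] [CompactSpace X]
    [TopologicalSpace A] [DiscreteTopology A] [Finite A] (hO : IsClosed (svOrbitSet F))
    (hc : Continuous c) (hinj : InjOn (fun w => c ∘ w) (svOrbitSet F)) (hshad : SVShadowing F) :
    ∃ L, ∀ s ∈ SFT (forbiddenWords F c L), ∃ z ∈ svOrbitSet F, c ∘ z = s := by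
  obtain ⟨V, hVfoc, hVshad⟩ := hshad _ (isFOC_fiberCover c hc)
  obtain ⟨n, hn⟩ := exists_mem_cover_of_itinerary_eqOn c hO hc hinj hVfoc.2.1 hVfoc.2.2
  refine ⟨n + 2, fun s hs => ?_⟩
  choose w hw hws using exists_orbit_of_mem_SFT c hs
  -- The orbits `w k` and `w (k + 1)` agree on `n + 1` letters after a shift by one, so the
  -- jump from `w k 1` to `w (k + 1) 0` is within one member of `V`.
  have hpseudo : IsSVPseudoOrbit F V fun k => w k 0 := by
    intro k
    obtain ⟨W, hWV, hW, hW'⟩ := hn _ (shift_mem_svOrbitSet (hw k) 1) _ (hw (k + 1))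
      fun i hi => by rw [hws k (1 + i) (by omega), hws (k + 1) i (by omega), add_assoc]
    exact ⟨W, hWV, ⟨w k 1, hw k 0, by simpa using hW⟩, hW'⟩
  obtain ⟨z, hz, hzx⟩ := hVshad _ hpseudo
  refine ⟨z, hz, funext fun i => ?_⟩
  rw [Function.comp_apply, ← itinerary_eq_of_shadowedBy_fiberCover c hzx i, hws i 0 (by omega),
    add_zero]

theorem exists_homeomorph_svOrbitSet_SFT [TopologicalSpace X] [CompactSpace X]
    [TopologicalSpace A] [DiscreteTopology A] [Finite A] (hO : IsClosed (svOrbitSet F))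
    (hc : Continuous c) (hinj : InjOn (fun w => c ∘ w) (svOrbitSet F)) (hshad : SVShadowing F) :
    ∃ L, ∃ h : svOrbitSet F ≃ₜ SFT (forbiddenWords F c L), ∀ w, (h w : ℕ → A) = c ∘ w := by
  obtain ⟨L, hsurj⟩ := exists_orbit_itinerary_eq_of_mem_SFT c hO hc hinj hshad
  have : CompactSpace (svOrbitSet F) := isCompact_iff_compactSpace.mp hO.isCompact
  let e : svOrbitSet F → SFT (forbiddenWords F c L) := fun w => ⟨c ∘ w, itinerary_mem_SFT c w.2 L⟩
  have he : Function.Bijective e := by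
    refine ⟨fun w w' h => Subtype.ext (hinj w.2 w'.2 (congrArg Subtype.val h)), fun s => ?_⟩
    obtain ⟨z, hz, hzs⟩ := hsurj s s.2
    exact ⟨⟨z, hz⟩, Subtype.ext hzs⟩
  have hcont : Continuous e :=
    (continuous_pi fun i => hc.comp ((continuous_apply i).comp continuous_subtype_val)).subtype_mk _
  exact ⟨L, Continuous.homeoOfEquivCompactToT2 (f := Equiv.ofBijective e he) hcont, fun _ => rfl⟩

end Coding

theorem orbitSystem_conjugate_SFT_of_expansive_shadowing_general
    {X : Type*} [UniformSpace X] [CompactSpace X] [T2Space X] [TotallyDisconnectedSpace X]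
    (F : X → Set X)
    (hFcpt : ∀ x, IsCompact (F x)) (hFusc : USCSV F)
    (hexp : ExpansiveSV F) (hshad : SVShadowing F) :
    ∃ S : Set ℕ, S.Finite ∧
      ∃ W : Set (List ↥S), W.Finite ∧
        ∃ h : ↥(svOrbitSet F) ≃ₜ ↥(SFT W),
          ∀ w : ↥(svOrbitSet F),
            ((h ⟨fun i => (w : ℕ → X) (i + 1), fun i => w.2 (i + 1)⟩ : ↥(SFT W)) : ℕ → ↥S)
              = fun i => ((h w : ↥(SFT W)) : ℕ → ↥S) (i + 1) := by
  obtain ⟨δ, hδ, hexpδ⟩ := hexp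
  obtain ⟨c, hc, hcδ⟩ := exists_continuous_nat_fibers_subset hδ
  have hS : (range c).Finite := (isCompact_range hc).finite_of_discrete
  have := hS.to_subtype
  let c' : X → range c := rangeFactorization c
  have hinj : InjOn (fun w => c' ∘ w) (svOrbitSet F) :=
    itinerary_injOn_svOrbitSet c' hexpδ fun x y hxy => hcδ x y (congrArg Subtype.val hxy)
  obtain ⟨L, h, hh⟩ := exists_homeomorph_svOrbitSet_SFT c'
    (isClosed_svOrbitSet (isClosed_graph_of_USCSV hFcpt hFusc)) (hc.subtype_mk _) hinj hshad
  refine ⟨range c, hS, _, forbiddenWords_finite c' L, h, fun w => ?_⟩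
  rw [hh, hh]
  rfl

/-- Theorem 4.8: if an expansive usc set-valued system on a compact
totally disconnected Hausdorff space has the set-valued shadowing property, then its
orbit system is conjugate to a subshift of finite type. -/
theorem orbitSystem_conjugate_SFT_of_expansive_shadowing
    {X : Type*} [UniformSpace X] [CompactSpace X] [T2Space X] [TotallyDisconnectedSpace X]
    (F : X → Set X)
    (hFne : ∀ x, (F x).Nonempty) (hFcpt : ∀ x, IsCompact (F x)) (hFusc : USCSV F)
    (hexp : ExpansiveSV F) (hshad : SVShadowing F) :
    ∃ S : Set ℕ, S.Finite ∧
      ∃ W : Set (List ↥S), W.Finite ∧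
        ∃ h : ↥(svOrbitSet F) ≃ₜ ↥(SFT W),
          ∀ w : ↥(svOrbitSet F),
            ((h ⟨fun i => (w : ℕ → X) (i + 1), fun i => w.2 (i + 1)⟩ : ↥(SFT W)) : ℕ → ↥S)
              = fun i => ((h w : ↥(SFT W)) : ℕ → ↥S) (i + 1) :=
  orbitSystem_conjugate_SFT_of_expansive_shadowing_general F hFcpt hFusc hexp hshad
end

section
/- Let (X, d) be a compact metric space and F : X → 2^X a set-valued map. Then F has the metric set-valued shadowing property (for every ε > 0 there is δ > 0 such that every sequence (x_i) with d(F(x_i), x_{i+1}) < δ for all i admits an F-orbit (z_i) ∈ Orb_F(X) with d(x_i, z_i) < ε for all i) if and only if for every finite open cover U of X there exists a finite open cover V of X such that every V-pseudo-orbit is U-shadowed by some F-orbit. -/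
open Set Filter Metric Topology

/-- The metric set-valued shadowing property. -/
def SVShadowingMetric {X : Type*} [MetricSpace X] (F : X → Set X) : Prop :=
  ∀ ε > (0 : ℝ), ∃ δ > (0 : ℝ), ∀ x : ℕ → X,
    (∀ i, Metric.infDist (x (i + 1)) (F (x i)) < δ) →
    ∃ z : ℕ → X, IsSVOrbit F z ∧ ∀ i, dist (x i) (z i) < ε

/-- Lemma 4.11: on a compact metric space, a set-valued map has the metric
set-valued shadowing property iff for every finite open cover `𝒰` there is a finite open
cover `𝒱` such that every `𝒱`-pseudo-orbit is `𝒰`-shadowed by some `F`-orbit. -/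
theorem svShadowingMetric_iff_svShadowing
    {X : Type*} [MetricSpace X] [CompactSpace X]
    (F : X → Set X)
    (hFne : ∀ x, (F x).Nonempty) (hFcpt : ∀ x, IsCompact (F x)) :
    SVShadowingMetric F ↔ SVShadowing F := by
  constructor
  · -- metric ⇒ cover
    intro hM U hU
    obtain ⟨r, hr, hleb⟩ := lebesgue_number_lemma_of_metric_sUnion isCompact_univ
      hU.2.1 (by rw [hU.2.2])
    obtain ⟨δ, hδ, hshad⟩ := hM r hr
    -- finite subcover by balls of radius δ/3
    obtain ⟨t, ht⟩ := isCompact_univ.elim_finite_subcover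
      (fun x : X => Metric.ball x (δ / 3)) (fun x => isOpen_ball)
      (fun x _ => mem_iUnion.2 ⟨x, mem_ball_self (by linarith)⟩)
    refine ⟨(fun x => Metric.ball x (δ / 3)) '' ↑t, ⟨t.finite_toSet.image _,
      ?_, ?_⟩, ?_⟩
    · rintro V ⟨c, -, rfl⟩; exact isOpen_ball
    · apply Set.eq_univ_of_univ_subset
      intro y hy
      obtain ⟨c, hc, hyc⟩ := mem_iUnion₂.1 (ht (mem_univ y))
      exact ⟨Metric.ball c (δ / 3), ⟨c, hc, rfl⟩, hyc⟩
    · intro x hx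
      have hpo : ∀ i, Metric.infDist (x (i + 1)) (F (x i)) < δ := by
        intro i
        obtain ⟨W, ⟨c, -, rfl⟩, ⟨y, hyF, hyW⟩, hxW⟩ := hx i
        have : dist (x (i + 1)) y < δ := by
          have h1 := mem_ball.1 hyW
          have h2 := mem_ball.1 hxW
          calc dist (x (i + 1)) y ≤ dist (x (i + 1)) c + dist c y := dist_triangle _ _ _
            _ < δ := by rw [dist_comm c y]; linarith
        exact lt_of_le_of_lt (Metric.infDist_le_dist_of_mem hyF) this
      obtain ⟨z, hz, hdz⟩ := hshad x hpo
      refine ⟨z, hz, fun i => ?_⟩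
      obtain ⟨W, hW, hball⟩ := hleb (x i) (mem_univ _)
      exact ⟨W, hW, hball (mem_ball_self hr), hball (by
        rw [mem_ball, dist_comm]; exact hdz i)⟩
  · -- cover ⇒ metric
    intro hS ε hε
    -- finite cover by balls of radius ε/2
    obtain ⟨t, ht⟩ := isCompact_univ.elim_finite_subcover
      (fun x : X => Metric.ball x (ε / 2)) (fun x => isOpen_ball)
      (fun x _ => mem_iUnion.2 ⟨x, mem_ball_self (by linarith)⟩)
    have hUfoc : IsFOC (X := X) ((fun x => Metric.ball x (ε / 2)) '' ↑t) := by
      refine ⟨t.finite_toSet.image _, ?_, ?_⟩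
      · rintro V ⟨c, -, rfl⟩; exact isOpen_ball
      · apply Set.eq_univ_of_univ_subset
        intro y hy
        obtain ⟨c, hc, hyc⟩ := mem_iUnion₂.1 (ht (mem_univ y))
        exact ⟨Metric.ball c (ε / 2), ⟨c, hc, rfl⟩, hyc⟩
    obtain ⟨V, hV, hshad⟩ := hS _ hUfoc
    obtain ⟨δ, hδ, hleb⟩ := lebesgue_number_lemma_of_metric_sUnion isCompact_univ
      hV.2.1 (by rw [hV.2.2])
    refine ⟨δ, hδ, fun x hx => ?_⟩
    have hpo : IsSVPseudoOrbit F V x := by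
      intro i
      obtain ⟨y, hyF, hyd⟩ := (Metric.infDist_lt_iff (hFne (x i))).1 (hx i)
      obtain ⟨W, hW, hball⟩ := hleb (x (i + 1)) (mem_univ _)
      exact ⟨W, hW, ⟨y, hyF, hball (by rwa [mem_ball, dist_comm])⟩,
        hball (mem_ball_self hδ)⟩
    obtain ⟨z, hz, hsh⟩ := hshad x hpo
    refine ⟨z, hz, fun i => ?_⟩
    obtain ⟨W, ⟨c, -, rfl⟩, hxW, hzW⟩ := hsh i
    have h1 := mem_ball.1 hxW
    have h2 := mem_ball.1 hzW
    calc dist (x i) (z i) ≤ dist (x i) c + dist c (z i) := dist_triangle _ _ _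
      _ < ε := by rw [dist_comm c (z i)]; linarith
end

section
/- Let Λ be a directed set and (g^η_λ, (X_λ, F_λ)) an inverse system of upper semicontinuous set-valued systems on compact Hausdorff spaces (each g^η_λ continuous and satisfying Condition (1.11), the system of spaces satisfying the Mittag-Leffler condition). Suppose that each (X_λ, F_λ) has the set-valued shadowing property, and that the induced inverse system ((g^η_λ)*, Orb_{F_λ}(X_λ)) of orbit spaces, where (g^η_λ)* applies g^η_λ coordinatewise, satisfies the Mittag-Leffler condition. Then the inverse limit set-valued system (lim←(g^η_λ, X_λ), lim← F_λ) has the set-valued shadowing property. -/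
open Set Filter Metric Topology

section AuxLemmas

lemma svOrbitSet_isClosed {X : Type*} [TopologicalSpace X] [T2Space X] (F : X → Set X)
    (hcpt : ∀ x, IsCompact (F x)) (husc : USCSV F) :
    IsClosed (svOrbitSet F) := by
  have hgraph : ∀ i : ℕ, IsClosed {w : ℕ → X | w (i+1) ∈ F (w i)} := by
    intro i
    rw [← isOpen_compl_iff, isOpen_iff_forall_mem_open]
    intro w hw
    simp only [mem_compl_iff, mem_setOf_eq] at hw
    obtain ⟨U, O, hU, hO, hFU, hwO, hdisj⟩ :=
      SeparatedNhds.of_isCompact_isCompact (hcpt (w i)) isCompact_singleton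
        (disjoint_singleton_right.2 hw)
    obtain ⟨V, hV, hwV, hVF⟩ := husc (w i) U hU hFU
    refine ⟨(fun v : ℕ → X => v i) ⁻¹' V ∩ (fun v : ℕ → X => v (i+1)) ⁻¹' O, ?_, ?_, ?_⟩
    · rintro v ⟨hv1, hv2⟩
      simp only [mem_compl_iff, mem_setOf_eq]
      intro hmem
      exact (hdisj.ne_of_mem (hVF _ hv1 hmem) hv2) rfl
    · exact ((hV.preimage (continuous_apply i)).inter (hO.preimage (continuous_apply (i+1))))
    · exact ⟨hwV, hwO rfl⟩
  have : svOrbitSet F = ⋂ i, {w : ℕ → X | w (i+1) ∈ F (w i)} := by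
    ext w; simp only [svOrbitSet, mem_setOf_eq, mem_iInter]
  rw [this]; exact isClosed_iInter hgraph

end AuxLemmas

open Classical in
lemma lift_orbit
    {Λ : Type*} [Preorder Λ] [IsDirected Λ (· ≤ ·)]
    (Xl : Λ → Type*) [∀ l, TopologicalSpace (Xl l)] [∀ l, CompactSpace (Xl l)]
    [∀ l, T2Space (Xl l)]
    (F : ∀ l, Xl l → Set (Xl l))
    (hFcpt : ∀ l x, IsCompact (F l x))
    (hFusc : ∀ l, USCSV (F l))
    (g : ∀ ⦃l e : Λ⦄, l ≤ e → Xl e → Xl l)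
    (hgcont : ∀ (l e : Λ) (h : l ≤ e), Continuous (g h))
    (hgid : ∀ (l : Λ) (x : Xl l), g (le_refl l) x = x)
    (hgcomp : ∀ (l e m : Λ) (h1 : l ≤ e) (h2 : e ≤ m) (x : Xl m),
      g h1 (g h2 x) = g (h1.trans h2) x)
    (hg11 : ∀ (l e : Λ) (h : l ≤ e) (x : Xl e), g h '' F e x ⊆ F l (g h x))
    (pt : ∀ l, Xl l)
    {lam e : Λ} (hle : lam ≤ e)
    (hml : ∀ (m : Λ) (h2 : e ≤ m),
      (fun w : ℕ → Xl e => g hle ∘ w) '' svOrbitSet (F e)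
        = (fun w : ℕ → Xl m => g (hle.trans h2) ∘ w) '' svOrbitSet (F m))
    (w : ℕ → Xl lam) (hw : w ∈ (fun u : ℕ → Xl e => g hle ∘ u) '' svOrbitSet (F e)) :
    ∃ x : ∀ l, ℕ → Xl l,
      (∀ l, x l ∈ svOrbitSet (F l)) ∧
      (∀ (l l' : Λ) (h : l ≤ l') (i : ℕ), g h (x l' i) = x l i) ∧
      x lam = w := by
  -- the directed family of closed sets
  set P := ∀ l, ℕ → Xl l
  let Z : {m : Λ // e ≤ m} → Set P := fun m =>
    {x | x m.1 ∈ svOrbitSet (F m.1) ∧ (∀ (l : Λ) (h : l ≤ m.1), g h ∘ x m.1 = x l) ∧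
      x lam = w}
  -- pushforward of orbits along g
  have hpush : ∀ (l m : Λ) (h : l ≤ m) (u : ℕ → Xl m), u ∈ svOrbitSet (F m) →
      (g h ∘ u) ∈ svOrbitSet (F l) := by
    intro l m h u hu i
    exact hg11 l m h (u i) ⟨u (i+1), hu i, rfl⟩
  have hZne : ∀ m, (Z m).Nonempty := by
    rintro ⟨m, hm⟩
    have := hml m hm
    rw [this] at hw
    obtain ⟨u, hu, hgu⟩ := hw
    refine ⟨fun l => if h : l ≤ m then g h ∘ u else fun i => pt l, ?_, ?_, ?_⟩
    · simp only [dif_pos (le_refl m)]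
      have : g (le_refl m) ∘ u = u := by
        funext i; exact hgid m (u i)
      rw [this]; exact hu
    · intro l h
      simp only [dif_pos h, dif_pos (le_refl m)]
      funext i
      simp only [Function.comp_apply]
      rw [hgid m (u i)]
    · simp only [dif_pos (hle.trans hm)]
      exact hgu
  have hZclosed : ∀ m, IsClosed (Z m) := by
    rintro ⟨m, hm⟩
    have h1 : IsClosed {x : P | x m ∈ svOrbitSet (F m)} :=
      (svOrbitSet_isClosed (F m) (hFcpt m) (hFusc m)).preimage (continuous_apply m)
    have h2 : IsClosed {x : P | ∀ (l : Λ) (h : l ≤ m), g h ∘ x m = x l} := by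
      have : {x : P | ∀ (l : Λ) (h : l ≤ m), g h ∘ x m = x l} =
          ⋂ (l : Λ) (h : l ≤ m), {x : P | g h ∘ x m = x l} := by
        ext x; simp only [mem_setOf_eq, mem_iInter]
      rw [this]
      refine isClosed_iInter fun l => isClosed_iInter fun h => ?_
      exact isClosed_eq
        (continuous_pi fun i => (hgcont l m h).comp ((continuous_apply i).comp (continuous_apply m)))
        (continuous_apply l)
    have h3 : IsClosed {x : P | x lam = w} :=
      isClosed_eq (continuous_apply lam) continuous_const
    have : Z ⟨m, hm⟩ = {x : P | x m ∈ svOrbitSet (F m)} ∩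
        ({x : P | ∀ (l : Λ) (h : l ≤ m), g h ∘ x m = x l} ∩ {x : P | x lam = w}) := by
      ext x; simp only [Z, mem_setOf_eq, mem_inter_iff]
    rw [this]; exact h1.inter (h2.inter h3)
  have hZdir : Directed (· ⊇ ·) Z := by
    rintro ⟨m, hm⟩ ⟨m', hm'⟩
    obtain ⟨m'', h1, h2⟩ := directed_of (· ≤ ·) m m'
    refine ⟨⟨m'', hm.trans h1⟩, ?_, ?_⟩
    all_goals {
      rintro x ⟨horb, hcomp, hlam⟩
      refine ⟨?_, ?_, hlam⟩
      · first
        | (rw [← hcomp m h1]; exact hpush m m'' h1 _ horb)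
        | (rw [← hcomp m' h2]; exact hpush m' m'' h2 _ horb)
      · intro l h
        first
        | (rw [← hcomp l (h.trans h1), ← hcomp m h1]
           funext i
           exact hgcomp l m m'' h h1 (x m'' i))
        | (rw [← hcomp l (h.trans h2), ← hcomp m' h2]
           funext i
           exact hgcomp l m' m'' h h2 (x m'' i)) }
  have hZcpt : ∀ m, IsCompact (Z m) := fun m => (hZclosed m).isCompact
  have hne : (⋂ m, Z m).Nonempty :=
    IsCompact.nonempty_iInter_of_directed_nonempty_isCompact_isClosed Z hZdir hZne hZcpt hZclosed
  obtain ⟨x, hx⟩ := hne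
  simp only [mem_iInter] at hx
  have key : ∀ (l : Λ) (m : Λ) (hm : e ≤ m) (h : l ≤ m), g h ∘ x m = x l :=
    fun l m hm h => (hx ⟨m, hm⟩).2.1 l h
  refine ⟨x, ?_, ?_, (hx ⟨e, le_refl e⟩).2.2⟩
  · intro l
    obtain ⟨m, h1, h2⟩ := directed_of (· ≤ ·) l e
    rw [← key l m h2 h1]
    exact hpush l m h1 _ (hx ⟨m, h2⟩).1
  · intro l l' h i
    obtain ⟨m, h1, h2⟩ := directed_of (· ≤ ·) l' e
    rw [← key l' m h2 h1, ← key l m h2 (h.trans h1)]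
    simp only [Function.comp_apply]
    exact hgcomp l l' m h h1 (x m i)

lemma invLim_compact
    {Λ : Type*} [Preorder Λ]
    (Xl : Λ → Type*) [∀ l, TopologicalSpace (Xl l)] [∀ l, CompactSpace (Xl l)]
    [∀ l, T2Space (Xl l)]
    (g : ∀ ⦃l e : Λ⦄, l ≤ e → Xl e → Xl l)
    (hgcont : ∀ (l e : Λ) (h : l ≤ e), Continuous (g h)) :
    IsCompact (invLimSet g) := by
  have hcl : IsClosed (invLimSet g) := by
    have : invLimSet g = ⋂ (l : Λ) (e : Λ) (h : l ≤ e), {x : ∀ l, Xl l | g h (x e) = x l} := by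
      ext x; simp only [invLimSet, Set.mem_setOf_eq, Set.mem_iInter]
    rw [this]
    exact isClosed_iInter fun l => isClosed_iInter fun e => isClosed_iInter fun h =>
      isClosed_eq ((hgcont l e h).comp (continuous_apply e)) (continuous_apply l)
  exact hcl.isCompact

open Classical in
lemma cover_refine
    {Λ : Type*} [Preorder Λ] [IsDirected Λ (· ≤ ·)] [Nonempty Λ]
    (Xl : Λ → Type*) [∀ l, TopologicalSpace (Xl l)] [∀ l, CompactSpace (Xl l)]
    [∀ l, T2Space (Xl l)]
    (g : ∀ ⦃l e : Λ⦄, l ≤ e → Xl e → Xl l)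
    (hgcont : ∀ (l e : Λ) (h : l ≤ e), Continuous (g h))
    (U : Set (Set ↥(invLimSet g))) (hU : IsFOC U) :
    ∃ (lam : Λ) (W : Set (Set (Xl lam))), W.Finite ∧ (∀ A ∈ W, IsOpen A) ∧
      (∀ p : ↥(invLimSet g), ∃ A ∈ W, (p : ∀ l, Xl l) lam ∈ A) ∧
      (∀ A ∈ W, ∃ B ∈ U, ∀ p : ↥(invLimSet g), (p : ∀ l, Xl l) lam ∈ A → p ∈ B) := by
  haveI : CompactSpace ↥(invLimSet g) :=
    isCompact_iff_compactSpace.mp (invLim_compact Xl g hgcont)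
  obtain ⟨hUfin, hUopen, hUcov⟩ := hU
  -- for each point, produce a coordinate, an open set there, and a member of U
  have step : ∀ p : ↥(invLimSet g), ∃ (m : Λ) (Wp : Set (Xl m)) (B : Set ↥(invLimSet g)), B ∈ U ∧ IsOpen Wp ∧
      (p : ∀ l, Xl l) m ∈ Wp ∧ ∀ q : ↥(invLimSet g), (q : ∀ l, Xl l) m ∈ Wp → q ∈ B := by
    intro p
    have hpB : ∃ B ∈ U, p ∈ B := by
      have : (p : ↥(invLimSet g)) ∈ ⋃₀ U := by rw [hUcov]; trivial
      simpa using this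
    obtain ⟨B, hBU, hpBmem⟩ := hpB
    obtain ⟨O, hOopen, hOval⟩ := isOpen_induced_iff.mp (hUopen B hBU)
    have hpO : (p : ∀ l, Xl l) ∈ O := by
      rw [← hOval] at hpBmem; exact hpBmem
    obtain ⟨I, u, hIu, hIsub⟩ := (isOpen_pi_iff.mp hOopen) _ hpO
    obtain ⟨m, hm⟩ := I.exists_le
    refine ⟨m, ⋂ l ∈ I, (if h : l ≤ m then g h ⁻¹' u l else Set.univ), B, hBU, ?_, ?_, ?_⟩
    · refine isOpen_biInter_finset fun l hl => ?_
      by_cases h : l ≤ m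
      · rw [dif_pos h]; exact (hIu l hl).1.preimage (hgcont l m h)
      · rw [dif_neg h]; exact isOpen_univ
    · refine Set.mem_biInter fun l hl => ?_
      rw [dif_pos (hm l hl)]
      show g (hm l hl) ((p : ∀ l, Xl l) m) ∈ u l
      rw [p.2 l m (hm l hl)]
      exact (hIu l hl).2
    · intro q hq
      have hqO : (q : ∀ l, Xl l) ∈ O := by
        apply hIsub
        intro l hl
        have h1 := Set.mem_iInter₂.mp hq l hl
        rw [dif_pos (hm l hl)] at h1
        have h2 : g (hm l hl) ((q : ∀ l, Xl l) m) ∈ u l := h1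
        rwa [q.2 l m (hm l hl)] at h2
      rw [← hOval]; exact hqO
  choose m Wp B hBU hWopen hpW hWB using step
  -- finite subcover
  have hcover : (Set.univ : Set ↥(invLimSet g)) ⊆ ⋃ p : ↥(invLimSet g), {q : ↥(invLimSet g) | (q : ∀ l, Xl l) (m p) ∈ Wp p} := by
    intro q _
    exact Set.mem_iUnion.mpr ⟨q, hpW q⟩
  have hopen : ∀ p : ↥(invLimSet g), IsOpen {q : ↥(invLimSet g) | (q : ∀ l, Xl l) (m p) ∈ Wp p} := by
    intro p
    exact (hWopen p).preimage ((continuous_apply (m p)).comp continuous_subtype_val)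
  obtain ⟨t, ht⟩ := isCompact_univ.elim_finite_subcover _ hopen hcover
  obtain ⟨lam, hlam⟩ := (t.image m).exists_le
  have hmlam : ∀ p ∈ t, m p ≤ lam := fun p hp => hlam _ (Finset.mem_image_of_mem m hp)
  refine ⟨lam, (fun p => if h : m p ≤ lam then g h ⁻¹' Wp p else Set.univ) '' ↑t,
    (t.finite_toSet.image _), ?_, ?_, ?_⟩
  · rintro A ⟨p, hp, rfl⟩
    simp only [dif_pos (hmlam p hp)]
    exact (hWopen p).preimage (hgcont _ _ _)
  · intro q
    obtain ⟨p, hp, hq⟩ := Set.mem_iUnion₂.mp (ht (Set.mem_univ q))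
    refine ⟨_, Set.mem_image_of_mem _ hp, ?_⟩
    simp only [dif_pos (hmlam p hp)]
    show g (hmlam p hp) ((q : ∀ l, Xl l) lam) ∈ Wp p
    rw [q.2 (m p) lam (hmlam p hp)]
    exact hq
  · rintro A ⟨p, hp, rfl⟩
    refine ⟨B p, hBU p, fun q hq => ?_⟩
    simp only [dif_pos (hmlam p hp)] at hq
    have : g (hmlam p hp) ((q : ∀ l, Xl l) lam) ∈ Wp p := hq
    rw [q.2 (m p) lam (hmlam p hp)] at this
    exact hWB p q this
/-- Theorem 4.13: for a Mittag-Leffler inverse system of usc set-valued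
systems, each with the set-valued shadowing property, whose induced inverse system of
orbit spaces also satisfies the Mittag-Leffler condition, the inverse limit set-valued
system has the set-valued shadowing property. -/
theorem invLim_svShadowing
    {Λ : Type*} [Preorder Λ] [IsDirected Λ (· ≤ ·)]
    (Xl : Λ → Type*) [∀ l, TopologicalSpace (Xl l)] [∀ l, CompactSpace (Xl l)]
    [∀ l, T2Space (Xl l)]
    (F : ∀ l, Xl l → Set (Xl l))
    (hFne : ∀ l x, (F l x).Nonempty) (hFcpt : ∀ l x, IsCompact (F l x))
    (hFusc : ∀ l, USCSV (F l))
    (g : ∀ ⦃l e : Λ⦄, l ≤ e → Xl e → Xl l)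
    (hgcont : ∀ (l e : Λ) (h : l ≤ e), Continuous (g h))
    (hgid : ∀ (l : Λ) (x : Xl l), g (le_refl l) x = x)
    (hgcomp : ∀ (l e m : Λ) (h1 : l ≤ e) (h2 : e ≤ m) (x : Xl m),
      g h1 (g h2 x) = g (h1.trans h2) x)
    (hg11 : ∀ (l e : Λ) (h : l ≤ e) (x : Xl e), g h '' F e x ⊆ F l (g h x))
    (hML : ∀ l : Λ, ∃ e : Λ, ∃ h : l ≤ e, ∀ (m : Λ) (h2 : e ≤ m),
      Set.range (g h) = Set.range (g (h.trans h2)))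
    (hshad : ∀ l, SVShadowing (F l))
    (hOrbML : ∀ l : Λ, ∃ e : Λ, ∃ h : l ≤ e, ∀ (m : Λ) (h2 : e ≤ m),
      (fun w : ℕ → Xl e => g h ∘ w) '' svOrbitSet (F e)
        = (fun w : ℕ → Xl m => g (h.trans h2) ∘ w) '' svOrbitSet (F m)) :
    SVShadowing (X := ↥(invLimSet g))
      (fun x => {y : ↥(invLimSet g) | ∀ l, (y : ∀ l, Xl l) l ∈ F l ((x : ∀ l, Xl l) l)}) := by
  classical
  intro U hU
  have hFOCuniv : IsFOC ({Set.univ} : Set (Set ↥(invLimSet g))) :=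
    ⟨Set.finite_singleton _, by rintro V rfl; exact isOpen_univ, by simp⟩
  by_cases hΛ : Nonempty Λ
  swap
  · -- Λ is empty: every sequence is an orbit
    refine ⟨{Set.univ}, hFOCuniv, fun x _ => ⟨x, fun i l => (hΛ ⟨l⟩).elim, fun i => ?_⟩⟩
    have : (x i : ↥(invLimSet g)) ∈ ⋃₀ U := by rw [hU.2.2]; trivial
    obtain ⟨W, hW, hxW⟩ := this
    exact ⟨W, hW, hxW, hxW⟩
  by_cases hNE : Nonempty ↥(invLimSet g)
  swap
  · exact ⟨{Set.univ}, hFOCuniv, fun x _ => (hNE ⟨x 0⟩).elim⟩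
  -- main case
  obtain ⟨lam, 𝒲, h𝒲fin, h𝒲open, h𝒲cov, h𝒲ref⟩ := cover_refine Xl g hgcont U hU
  obtain ⟨e, hle, hml⟩ := hOrbML lam
  set img : Set (Xl lam) :=
    (fun p : ↥(invLimSet g) => (p : ∀ l, Xl l) lam) '' Set.univ with himg
  have himgcpt : IsCompact img := by
    haveI : CompactSpace ↥(invLimSet g) :=
      isCompact_iff_compactSpace.mp (invLim_compact Xl g hgcont)
    exact isCompact_univ.image ((continuous_apply lam).comp continuous_subtype_val)
  set 𝒲' : Set (Set (Xl lam)) := insert imgᶜ 𝒲 with h𝒲'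
  have h𝒲'FOC : IsFOC 𝒲' := by
    refine ⟨h𝒲fin.insert _, ?_, ?_⟩
    · rintro A (rfl | hA)
      · exact himgcpt.isClosed.isOpen_compl
      · exact h𝒲open A hA
    · apply Set.eq_univ_of_forall
      intro y
      by_cases hy : y ∈ img
      · obtain ⟨p, -, rfl⟩ := hy
        obtain ⟨A, hA, hpA⟩ := h𝒲cov p
        exact ⟨A, Set.mem_insert_of_mem _ hA, hpA⟩
      · exact ⟨imgᶜ, Set.mem_insert _ _, hy⟩
  set 𝒰e : Set (Set (Xl e)) := (fun A : Set (Xl lam) => g hle ⁻¹' A) '' 𝒲' with h𝒰e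
  have h𝒰eFOC : IsFOC 𝒰e := by
    refine ⟨h𝒲'FOC.1.image _, ?_, ?_⟩
    · rintro A ⟨A', hA', rfl⟩
      exact (h𝒲'FOC.2.1 A' hA').preimage (hgcont lam e hle)
    · apply Set.eq_univ_of_forall
      intro y
      have : g hle y ∈ ⋃₀ 𝒲' := by rw [h𝒲'FOC.2.2]; trivial
      obtain ⟨A, hA, hyA⟩ := this
      exact ⟨g hle ⁻¹' A, Set.mem_image_of_mem _ hA, hyA⟩
  obtain ⟨𝒱e, h𝒱eFOC, h𝒱eshad⟩ := hshad e 𝒰e h𝒰eFOC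
  set V : Set (Set ↥(invLimSet g)) :=
    (fun A : Set (Xl e) => (fun p : ↥(invLimSet g) => (p : ∀ l, Xl l) e) ⁻¹' A) '' 𝒱e with hV
  have hVFOC : IsFOC V := by
    refine ⟨h𝒱eFOC.1.image _, ?_, ?_⟩
    · rintro A ⟨A', hA', rfl⟩
      exact (h𝒱eFOC.2.1 A' hA').preimage ((continuous_apply e).comp continuous_subtype_val)
    · apply Set.eq_univ_of_forall
      intro p
      have : (p : ∀ l, Xl l) e ∈ ⋃₀ 𝒱e := by rw [h𝒱eFOC.2.2]; trivial
      obtain ⟨A, hA, hpA⟩ := this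
      exact ⟨_, Set.mem_image_of_mem _ hA, hpA⟩
  refine ⟨V, hVFOC, ?_⟩
  intro x hx
  -- project the pseudo-orbit to coordinate e
  have hy : IsSVPseudoOrbit (F e) 𝒱e (fun i => (x i : ∀ l, Xl l) e) := by
    intro i
    obtain ⟨W, hWV, ⟨q, hqF, hqW⟩, hx1W⟩ := hx i
    obtain ⟨A, hA𝒱, rfl⟩ := hWV
    exact ⟨A, hA𝒱, ⟨(q : ∀ l, Xl l) e, hqF e, hqW⟩, hx1W⟩
  obtain ⟨z, hzorb, hzshad⟩ := h𝒱eshad _ hy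
  -- lift the shadowing orbit to the inverse limit
  obtain ⟨p0⟩ := hNE
  obtain ⟨xfam, hxorb, hxcomp, hxlam⟩ :=
    lift_orbit Xl F hFcpt hFusc g hgcont hgid hgcomp hg11 (p0 : ∀ l, Xl l) hle hml
      (g hle ∘ z) ⟨z, hzorb, rfl⟩
  refine ⟨fun i => ⟨fun l => xfam l i, fun l l' h => hxcomp l l' h i⟩,
    fun i l => hxorb l i, ?_⟩
  intro i
  obtain ⟨Wu, hWu𝒰, hyW, hzW⟩ := hzshad i
  obtain ⟨A, hA𝒲', rfl⟩ := hWu𝒰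
  have hxA : (x i : ∀ l, Xl l) lam ∈ A := by
    rw [← (x i).2 lam e hle]; exact hyW
  have hA𝒲 : A ∈ 𝒲 := by
    rcases hA𝒲' with rfl | h
    · exact absurd ⟨x i, Set.mem_univ _, rfl⟩ hxA
    · exact h
  obtain ⟨Bu, hBU, hBref⟩ := h𝒲ref A hA𝒲
  refine ⟨Bu, hBU, hBref (x i) hxA, hBref _ ?_⟩
  show xfam lam i ∈ A
  have hzi : xfam lam i = g hle (z i) := congrFun hxlam i
  rw [hzi]
  exact hzW
end

section
/- Let F : X → 2^X be an upper semicontinuous set-valued map on a compact totally disconnected metric space (X, d), and let ε > 0. Then there exists an upper semicontinuous set-valued map G : X → 2^X with the set-valued shadowing property such that d_H(F(x), G(x)) < ε for all x ∈ X. Consequently, the set of upper semicontinuous set-valued maps with the set-valued shadowing property is dense in (UC(X), d_H^∞). -/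
open Set Filter Metric Topology

/-- Lemma 7.4/Theorem 7.4: any usc set-valued map on a compact totally
disconnected metric space can be `ε`-approximated, uniformly in the Hausdorff metric,
by an usc set-valued map with the set-valued shadowing property; hence maps with the
shadowing property are dense in `(UC(X), d_H^∞)`. -/
theorem svShadowing_dense
    {X : Type*} [MetricSpace X] [CompactSpace X] [TotallyDisconnectedSpace X]
    (F : X → Set X)
    (hFne : ∀ x, (F x).Nonempty) (hFcpt : ∀ x, IsCompact (F x)) (hFusc : USCSV F)
    (ε : ℝ) (hε : 0 < ε) :
    ∃ G : X → Set X,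
      (∀ x, (G x).Nonempty) ∧ (∀ x, IsCompact (G x)) ∧ USCSV G ∧
      SVShadowingMetric G ∧
      ∀ x, Metric.hausdorffDist (F x) (G x) < ε := by
  classical
  rcases isEmpty_or_nonempty X with hX | hX
  · refine ⟨F, hFne, hFcpt, hFusc, ?_, fun x => (IsEmpty.false x).elim⟩
    intro ε' hε'
    exact ⟨1, one_pos, fun x _ => (IsEmpty.false (x 0)).elim⟩
  -- a clopen basis
  have hc : ∀ x : X, ∃ C : Set X, IsClopen C ∧ x ∈ C ∧ C ⊆ Metric.ball x (ε / 4) := by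
    intro x
    obtain ⟨C, hC, hxC, hsub⟩ := (isTopologicalBasis_isClopen (X := X)).exists_subset_of_mem_open
      (Metric.mem_ball_self (show (0:ℝ) < ε / 4 by positivity)) Metric.isOpen_ball
    exact ⟨C, hC, hxC, hsub⟩
  choose c hc_clopen hc_mem hc_sub using hc
  obtain ⟨t, ht⟩ := isCompact_univ.elim_finite_subcover (fun x : X => c x)
    (fun x => (hc_clopen x).2) (fun x _ => mem_iUnion.mpr ⟨x, hc_mem x⟩)
  set n := t.card with hn
  let e : Fin n → X := fun i => (t.equivFin.symm i : X)
  let C : Fin n → Set X := fun i => c (e i)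
  have hCclopen : ∀ i, IsClopen (C i) := fun i => hc_clopen (e i)
  have hCcover : ∀ x : X, ∃ i, x ∈ C i := by
    intro x
    have hx := ht (mem_univ x)
    simp only [mem_iUnion] at hx
    obtain ⟨y, hy, hxy⟩ := hx
    refine ⟨t.equivFin ⟨y, hy⟩, ?_⟩
    simp only [C, e, Equiv.symm_apply_apply]
    exact hxy
  -- diameter control on pieces
  have hCsmall : ∀ i, ∀ p ∈ C i, ∀ q ∈ C i, dist p q ≤ ε / 2 := by
    intro i p hp q hq
    have h1 := hc_sub (e i) hp
    have h2 := hc_sub (e i) hq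
    rw [Metric.mem_ball] at h1 h2
    calc dist p q ≤ dist p (e i) + dist (e i) q := dist_triangle _ _ _
      _ ≤ ε / 4 + ε / 4 := by
          rw [dist_comm (e i) q]; exact add_le_add h1.le h2.le
      _ = ε / 2 := by ring
  -- disjointify
  let D : Fin n → Set X := fun i => C i \ ⋃ j ∈ Finset.Iio i, C j
  have hDsub : ∀ i, D i ⊆ C i := fun i => diff_subset
  have hDclopen : ∀ i, IsClopen (D i) := by
    intro i
    refine (hCclopen i).diff ⟨?_, ?_⟩
    · exact isClosed_biUnion_finset fun j _ => (hCclopen j).1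
    · exact isOpen_biUnion fun j _ => (hCclopen j).2
  have hDdisj : ∀ i j, i ≠ j → ∀ p, p ∈ D i → p ∈ D j → False := by
    have key : ∀ i j : Fin n, i < j → ∀ p, p ∈ D i → p ∈ D j → False := by
      intro i j hij p hpi hpj
      exact hpj.2 (mem_biUnion (Finset.mem_Iio.mpr hij) (hDsub i hpi))
    intro i j hij p hpi hpj
    rcases lt_or_gt_of_ne hij with h | h
    · exact key i j h p hpi hpj
    · exact key j i h p hpj hpi
  have hDcover : ∀ x : X, ∃ i, x ∈ D i := by
    intro x
    have hne : (Finset.univ.filter (fun i : Fin n => x ∈ C i)).Nonempty := by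
      obtain ⟨i, hi⟩ := hCcover x
      exact ⟨i, Finset.mem_filter.mpr ⟨Finset.mem_univ i, hi⟩⟩
    set i₀ := (Finset.univ.filter (fun i : Fin n => x ∈ C i)).min' hne with hi₀
    refine ⟨i₀, (Finset.mem_filter.mp ((Finset.univ.filter _).min'_mem hne)).2, ?_⟩
    intro hmem
    simp only [Finset.mem_coe, mem_iUnion, Finset.mem_Iio] at hmem
    obtain ⟨j, hji, hxj⟩ := hmem
    have : i₀ ≤ j := Finset.min'_le _ j (Finset.mem_filter.mpr ⟨Finset.mem_univ j, hxj⟩)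
    exact absurd hji (not_lt.mpr this)
  -- the approximating map
  set G : X → Set X := fun x => ⋃ i, ⋃ (_ : (F x ∩ D i).Nonempty), D i with hG
  have hmemG : ∀ x p, p ∈ G x ↔ ∃ i, (F x ∩ D i).Nonempty ∧ p ∈ D i := by
    intro x p; simp [hG, mem_iUnion]
  have hFsubG : ∀ x, F x ⊆ G x := by
    intro x p hp
    obtain ⟨i, hi⟩ := hDcover p
    exact (hmemG x p).mpr ⟨i, ⟨p, hp, hi⟩, hi⟩
  have hGne : ∀ x, (G x).Nonempty := fun x => (hFne x).mono (hFsubG x)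
  have hGopen : ∀ x, IsOpen (G x) :=
    fun x => isOpen_iUnion fun i => isOpen_iUnion fun _ => (hDclopen i).2
  have hGclosed : ∀ x, IsClosed (G x) := by
    intro x
    have : G x = ⋃ i ∈ {i : Fin n | (F x ∩ D i).Nonempty}, D i := by
      ext p; rw [hmemG]; simp [mem_iUnion]
    rw [this]
    exact (Set.toFinite _).isClosed_biUnion fun i _ => (hDclopen i).1
  have hGcpt : ∀ x, IsCompact (G x) := fun x => (hGclosed x).isCompact
  -- pieces that meet G x are contained in G x
  have hpiece : ∀ x i p, p ∈ D i → p ∈ G x → D i ⊆ G x := by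
    intro x i p hpD hpG
    obtain ⟨j, hj, hpj⟩ := (hmemG x p).mp hpG
    have hij : i = j := by
      by_contra hne
      exact hDdisj i j hne p hpD hpj
    subst hij
    intro q hq
    exact (hmemG x q).mpr ⟨i, hj, hq⟩
  -- upper semicontinuity of G
  have hGusc : USCSV G := by
    intro x U hUopen hGU
    obtain ⟨V, hVopen, hxV, hV⟩ := hFusc x (G x) (hGopen x) (hFsubG x)
    refine ⟨V, hVopen, hxV, fun y hy p hp => ?_⟩
    obtain ⟨i, ⟨q, hqF, hqD⟩, hpD⟩ := (hmemG y p).mp hp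
    exact hGU (hpiece x i q hqD (hV y hy hqF) hpD)
  -- shadowing
  have hGshadow : SVShadowingMetric G := by
    intro ε' hε'
    have hδi : ∀ i : Fin n, ∃ δ > (0 : ℝ), Metric.thickening δ (D i) ⊆ D i := fun i =>
      ((hDclopen i).1.isCompact).exists_thickening_subset_open (hDclopen i).2 subset_rfl
    choose δf hδfpos hδf using hδi
    have hnpos : (Finset.univ : Finset (Fin n)).Nonempty := by
      obtain ⟨i, _⟩ := hCcover (Classical.arbitrary X)
      exact ⟨i, Finset.mem_univ i⟩
    set δ := Finset.univ.inf' hnpos δf with hδ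
    have hδpos : 0 < δ := by
      rw [hδ, Finset.lt_inf'_iff]
      exact fun i _ => hδfpos i
    refine ⟨δ, hδpos, fun x hx => ?_⟩
    have horbit : ∀ i, x (i + 1) ∈ G (x i) := by
      intro i
      obtain ⟨g, hgG, hgd⟩ := (Metric.infDist_lt_iff (hGne (x i))).mp (hx i)
      obtain ⟨j, hj, hgD⟩ := (hmemG (x i) g).mp hgG
      have hxD : x (i + 1) ∈ D j := by
        apply hδf j
        rw [Metric.mem_thickening_iff]
        exact ⟨g, hgD, lt_of_lt_of_le hgd (Finset.inf'_le _ (Finset.mem_univ j))⟩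
      exact (hmemG (x i) (x (i + 1))).mpr ⟨j, hj, hxD⟩
    exact ⟨x, horbit, fun i => by simpa using hε'⟩
  -- Hausdorff distance estimate
  refine ⟨G, hGne, hGcpt, hGusc, hGshadow, fun x => ?_⟩
  have hle : Metric.hausdorffDist (F x) (G x) ≤ ε / 2 := by
    have hε2 : (0 : ℝ) ≤ ε / 2 := by positivity
    refine Metric.hausdorffDist_le_of_mem_dist hε2 ?_ ?_
    · intro p hp
      exact ⟨p, hFsubG x hp, by simpa using hε2⟩
    · intro p hp
      obtain ⟨i, ⟨q, hqF, hqD⟩, hpD⟩ := (hmemG x p).mp hp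
      exact ⟨q, hqF, by rw [dist_comm]; exact hCsmall i q (hDsub i hqD) p (hDsub i hpD)⟩
  linarith
end

section
/- Let F : X → 2^X be an upper semicontinuous set-valued map on a compact totally disconnected Hausdorff space X. Then F has the set-valued shadowing property if and only if for every finite clopen partition U ∈ Part(X) there is a finer partition V ∈ Part(X) such that for every partition W ∈ Part(X) finer than V, the induced coordinatewise map ι : W^ℕ → U^ℕ satisfies ι(PO(W)) = O(U). -/
open Set Filter Metric Topology

section Part

variable {X : Type*} [TopologicalSpace X]

/-- A finite partition of `X` into nonempty clopen sets. -/
def IsClopenPartition (U : Set (Set X)) : Prop :=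
  U.Finite ∧ (∀ W ∈ U, IsClopen W ∧ W.Nonempty) ∧ ⋃₀ U = Set.univ ∧
    ∀ W₁ ∈ U, ∀ W₂ ∈ U, W₁ ≠ W₂ → W₁ ∩ W₂ = ∅

/-- `V` refines `U`: every member of `V` is contained in some member of `U`. -/
def Refines (V U : Set (Set X)) : Prop := ∀ W ∈ V, ∃ W' ∈ U, W ⊆ W'

/-- `PO(𝒰)`: sequences of members of `𝒰` which are pseudo-orbit patterns, i.e.
`F(U_i) ∩ U_{i+1} ≠ ∅` for all `i`. -/
def POSet (F : X → Set X) (U : Set (Set X)) : Set (ℕ → Set X) :=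
  {Us | (∀ i, Us i ∈ U) ∧ ∀ i, ∃ x ∈ Us i, (F x ∩ Us (i + 1)).Nonempty}

/-- `O(𝒰)`: sequences of members of `𝒰` which are orbit patterns, i.e. `[U_i] ≠ ∅`. -/
def OSet (F : X → Set X) (U : Set (Set X)) : Set (ℕ → Set X) :=
  {Us | (∀ i, Us i ∈ U) ∧ (seqDisc F Us).Nonempty}

/-- The image under the coordinatewise refinement map `ι` into sequences over `𝒰`. -/
def iotaImage (U : Set (Set X)) (S : Set (ℕ → Set X)) : Set (ℕ → Set X) :=
  {Us | (∀ i, Us i ∈ U) ∧ ∃ Ws ∈ S, ∀ i, Ws i ⊆ Us i}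

end Part

section Aux

variable {X : Type*} [TopologicalSpace X]

lemma part_mem_exists {U : Set (Set X)} (hU : IsClopenPartition U) (x : X) :
    ∃ A ∈ U, x ∈ A := by
  have hx : x ∈ ⋃₀ U := hU.2.2.1 ▸ Set.mem_univ x
  exact hx

lemma part_eq {U : Set (Set X)} (hU : IsClopenPartition U) {A B : Set X}
    (hA : A ∈ U) (hB : B ∈ U) {x : X} (hxA : x ∈ A) (hxB : x ∈ B) : A = B := by
  by_contra h
  have h2 := hU.2.2.2 A hA B hB h
  exact absurd (h2 ▸ Set.mem_inter hxA hxB) (Set.notMem_empty x)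

lemma clopenPartition_isFOC {U : Set (Set X)} (hU : IsClopenPartition U) : IsFOC U :=
  ⟨hU.1, fun V hV => (hU.2.1 V hV).1.2, hU.2.2.1⟩

lemma refines_trans {U V W : Set (Set X)} (h1 : Refines W V) (h2 : Refines V U) :
    Refines W U := by
  intro A hA
  obtain ⟨B, hB, hAB⟩ := h1 A hA
  obtain ⟨Cc, hC, hBC⟩ := h2 B hB
  exact ⟨Cc, hC, hAB.trans hBC⟩

lemma refines_refl (U : Set (Set X)) : Refines U U := fun A hA => ⟨A, hA, subset_rfl⟩

/-- common refinement of two finite open covers -/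
lemma isFOC_pairInter {U V : Set (Set X)} (hU : IsFOC U) (hV : IsFOC V) :
    ∃ W : Set (Set X), IsFOC W ∧ Refines W U ∧ Refines W V := by
  refine ⟨(fun p : Set X × Set X => p.1 ∩ p.2) '' (U ×ˢ V), ⟨?_, ?_, ?_⟩, ?_, ?_⟩
  · exact (hU.1.prod hV.1).image _
  · rintro W ⟨⟨A, B⟩, ⟨hA, hB⟩, rfl⟩
    exact (hU.2.1 A hA).inter (hV.2.1 B hB)
  · apply Set.eq_univ_of_forall
    intro x
    have hxU : x ∈ ⋃₀ U := hU.2.2 ▸ Set.mem_univ x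
    have hxV : x ∈ ⋃₀ V := hV.2.2 ▸ Set.mem_univ x
    obtain ⟨A, hA, hxA⟩ := hxU
    obtain ⟨B, hB, hxB⟩ := hxV
    exact ⟨A ∩ B, ⟨⟨A, B⟩, ⟨hA, hB⟩, rfl⟩, hxA, hxB⟩
  · rintro W ⟨⟨A, B⟩, ⟨hA, hB⟩, rfl⟩
    exact ⟨A, hA, Set.inter_subset_left⟩
  · rintro W ⟨⟨A, B⟩, ⟨hA, hB⟩, rfl⟩
    exact ⟨B, hB, Set.inter_subset_right⟩

/-- every finite open cover of a compact totally disconnected Hausdorff space is refined by a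
finite clopen partition -/
lemma exists_clopen_partition_refines [CompactSpace X] [T2Space X] [TotallyDisconnectedSpace X]
    {U : Set (Set X)} (hU : IsFOC U) :
    ∃ P : Set (Set X), IsClopenPartition P ∧ Refines P U := by
  have hx : ∀ x : X, ∃ C : Set X, IsClopen C ∧ x ∈ C ∧ ∃ A ∈ U, C ⊆ A := by
    intro x
    have hmem : x ∈ ⋃₀ U := hU.2.2 ▸ Set.mem_univ x
    obtain ⟨A, hA, hxA⟩ := hmem
    obtain ⟨C, hC, hxC, hCA⟩ := compact_exists_isClopen_in_isOpen (hU.2.1 A hA) hxA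
    exact ⟨C, hC, hxC, A, hA, hCA⟩
  choose C hCcl hxC hCsub using hx
  obtain ⟨t, ht⟩ := isCompact_univ.elim_finite_subcover C (fun x => (hCcl x).2)
    (fun x _ => Set.mem_iUnion.2 ⟨x, hxC x⟩)
  set A : X → Set X := fun y => {z | ∀ x ∈ t, (z ∈ C x ↔ y ∈ C x)} with hAdef
  have hself : ∀ y, y ∈ A y := fun y x _ => Iff.rfl
  have hAeq : ∀ y z, z ∈ A y → A z = A y := by
    intro y z hz
    ext w
    constructor <;> intro hw x hx
    · exact (hw x hx).trans (hz x hx)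
    · exact (hw x hx).trans (hz x hx).symm
  refine ⟨Set.range A, ⟨?_, ?_, ?_, ?_⟩, ?_⟩
  · -- finiteness
    have : Set.range A ⊆ Set.range (fun f : ↥t → Prop => {z | ∀ x : ↥t, (z ∈ C ↑x ↔ f x)}) := by
      rintro _ ⟨y, rfl⟩
      refine ⟨fun x : ↥t => y ∈ C ↑x, ?_⟩
      ext z
      constructor
      · intro hz x hx; exact hz ⟨x, hx⟩
      · intro hz x; exact hz ↑x x.2
    exact (Set.finite_range _).subset this
  · rintro _ ⟨y, rfl⟩
    constructor
    · have heq : A y = ⋂ x ∈ t, {z | z ∈ C x ↔ y ∈ C x} := by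
        ext z; simp [hAdef]
      rw [heq]
      refine isClopen_biInter_finset fun x _ => ?_
      by_cases hyx : y ∈ C x
      · have : {z | z ∈ C x ↔ y ∈ C x} = C x := by ext z; simp [hyx]
        rw [this]; exact hCcl x
      · have : {z | z ∈ C x ↔ y ∈ C x} = (C x)ᶜ := by ext z; simp [hyx]
        rw [this]; exact (hCcl x).compl
    · exact ⟨y, hself y⟩
  · exact Set.eq_univ_of_forall fun y => ⟨A y, ⟨y, rfl⟩, hself y⟩
  · rintro _ ⟨y, rfl⟩ _ ⟨y', rfl⟩ hne
    rw [Set.eq_empty_iff_forall_notMem]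
    rintro z ⟨hz1, hz2⟩
    exact hne ((hAeq y z hz1).symm.trans (hAeq y' z hz2))
  · rintro _ ⟨y, rfl⟩
    have : y ∈ ⋃ x ∈ t, C x := ht (Set.mem_univ y)
    obtain ⟨x, hxt, hyx⟩ := Set.mem_iUnion₂.1 this
    obtain ⟨B, hB, hCB⟩ := hCsub x
    refine ⟨B, hB, fun z hz => hCB ((hz x hxt).2 hyx)⟩

/-- the graph of a usc compact-valued map is closed -/
lemma graph_isClosed [CompactSpace X] [T2Space X] (F : X → Set X)
    (hFcpt : ∀ x, IsCompact (F x)) (hFusc : USCSV F) :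
    IsClosed {p : X × X | p.2 ∈ F p.1} := by
  rw [← isOpen_compl_iff, isOpen_iff_forall_mem_open]
  rintro ⟨x, y⟩ hxy
  have hyc : y ∉ F x := hxy
  obtain ⟨Uo, Wo, hUo, hWo, hFU, hyW, hdisj⟩ :=
    normal_separation (hFcpt x).isClosed isClosed_singleton
      (Set.disjoint_singleton_right.2 hyc)
  obtain ⟨V, hVo, hxV, hFV⟩ := hFusc x Uo hUo hFU
  refine ⟨V ×ˢ Wo, ?_, hVo.prod hWo, hxV, hyW rfl⟩
  rintro ⟨a, b⟩ ⟨ha, hb⟩ hbF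
  exact Set.disjoint_left.1 hdisj (hFV a ha hbF) hb

variable (F : X → Set X)

/-- extraction of a finite chain from `tupleDisc` -/
lemma chain_of_mem_tupleDisc :
    ∀ (n : ℕ) (U : ℕ → Set X) (x : X), x ∈ tupleDisc F n U →
      ∃ c : ℕ → X, c 0 = x ∧ (∀ i < n, c (i + 1) ∈ F (c i)) ∧ ∀ i ≤ n, c i ∈ U i := by
  intro n
  induction n with
  | zero =>
    intro U x hx
    exact ⟨fun _ => x, rfl, fun i hi => absurd hi (Nat.not_lt_zero i),
      fun i hi => by rw [Nat.le_zero.1 hi]; exact hx⟩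
  | succ n ih =>
    intro U x hx
    obtain ⟨hx0, y, hyF, hyT⟩ := hx
    obtain ⟨c', hc'0, hc'F, hc'U⟩ := ih (fun i => U (i + 1)) y hyT
    refine ⟨fun i => match i with | 0 => x | (j + 1) => c' j, rfl, ?_, ?_⟩
    · intro i hi
      match i, hi with
      | 0, _ => simpa [hc'0] using hyF
      | (j + 1), hj => exact hc'F j (by omega)
    · intro i hi
      match i, hi with
      | 0, _ => exact hx0
      | (j + 1), hj => exact hc'U j (by omega)

/-- an orbit through the `U i` yields membership in every `tupleDisc` -/
lemma mem_tupleDisc_of_orbit :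
    ∀ (n : ℕ) (Us : ℕ → Set X) (z : ℕ → X), IsSVOrbit F z → (∀ i, z i ∈ Us i) →
      z 0 ∈ tupleDisc F n Us := by
  intro n
  induction n with
  | zero => intro Us z _ h; exact h 0
  | succ n ih =>
    intro Us z hz h
    exact ⟨h 0, z 1, hz 0,
      ih (fun i => Us (i + 1)) (fun i => z (i + 1)) (fun i => hz (i + 1)) fun i => h (i + 1)⟩

lemma mem_seqDisc_of_orbit (Us : ℕ → Set X) (z : ℕ → X) (hz : IsSVOrbit F z)
    (h : ∀ i, z i ∈ Us i) : z 0 ∈ seqDisc F Us :=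
  Set.mem_iInter.2 fun n => mem_tupleDisc_of_orbit F n Us z hz h

/-- compactness: nonempty `tupleDisc`s yield an infinite orbit -/
lemma exists_orbit_of_tupleDisc [CompactSpace X] [T2Space X]
    (hFne : ∀ x, (F x).Nonempty) (hFcpt : ∀ x, IsCompact (F x)) (hFusc : USCSV F)
    (Us : ℕ → Set X) (hcl : ∀ i, IsClosed (Us i))
    (hne : ∀ n, (tupleDisc F n Us).Nonempty) :
    ∃ z : ℕ → X, IsSVOrbit F z ∧ ∀ i, z i ∈ Us i := by
  have hG : IsClosed {p : X × X | p.2 ∈ F p.1} := graph_isClosed F hFcpt hFusc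
  set K : ℕ → Set (ℕ → X) :=
    fun n => {w | (∀ i < n, w (i + 1) ∈ F (w i)) ∧ ∀ i ≤ n, w i ∈ Us i} with hK
  have hKcl : ∀ n, IsClosed (K n) := by
    intro n
    have h1 : IsClosed {w : ℕ → X | ∀ i < n, w (i + 1) ∈ F (w i)} := by
      have heq : {w : ℕ → X | ∀ i < n, w (i + 1) ∈ F (w i)} =
          ⋂ i, ⋂ (_ : i < n), (fun w : ℕ → X => (w i, w (i + 1))) ⁻¹' {p : X × X | p.2 ∈ F p.1} := by
        ext w; simp
      rw [heq]
      exact isClosed_iInter fun i => isClosed_iInter fun _ =>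
        hG.preimage ((continuous_apply i).prodMk (continuous_apply (i + 1)))
    have h2 : IsClosed {w : ℕ → X | ∀ i ≤ n, w i ∈ Us i} := by
      have heq : {w : ℕ → X | ∀ i ≤ n, w i ∈ Us i} =
          ⋂ i, ⋂ (_ : i ≤ n), (fun w : ℕ → X => w i) ⁻¹' Us i := by
        ext w; simp
      rw [heq]
      exact isClosed_iInter fun i => isClosed_iInter fun _ =>
        (hcl i).preimage (continuous_apply i)
    exact h1.inter h2
  have hKne : ∀ n, (K n).Nonempty := by
    intro n
    obtain ⟨x, hx⟩ := hne n
    obtain ⟨c, hc0, hcF, hcU⟩ := chain_of_mem_tupleDisc F n Us x hx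
    refine ⟨fun i => c (min i n), fun i hi => ?_, fun i hi => ?_⟩
    · show c (min (i + 1) n) ∈ F (c (min i n))
      rw [min_eq_left (le_of_lt hi), min_eq_left hi]
      exact hcF i hi
    · show c (min i n) ∈ Us i
      rw [min_eq_left hi]
      exact hcU i hi
  have hdir : Directed (· ⊇ ·) K := by
    intro m n
    refine ⟨max m n, fun w hw => ⟨fun i hi => hw.1 i (lt_of_lt_of_le hi (le_max_left m n)),
        fun i hi => hw.2 i (le_trans hi (le_max_left m n))⟩,
      fun w hw => ⟨fun i hi => hw.1 i (lt_of_lt_of_le hi (le_max_right m n)),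
        fun i hi => hw.2 i (le_trans hi (le_max_right m n))⟩⟩
  obtain ⟨z, hz⟩ := IsCompact.nonempty_iInter_of_directed_nonempty_isCompact_isClosed K hdir
    hKne (fun n => (hKcl n).isCompact) hKcl
  simp only [Set.mem_iInter] at hz
  exact ⟨z, fun i => (hz (i + 1)).1 i (by omega), fun i => (hz i).2 i le_rfl⟩

end Aux

/-- Lemma 6.5: an usc set-valued map on a compact totally disconnected
Hausdorff space has the set-valued shadowing property iff for every finite clopen
partition `𝒰` there is a finer partition `𝒱` such that `ι(PO(𝒲)) = O(𝒰)` for every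
partition `𝒲` finer than `𝒱`. -/
theorem svShadowing_iff_iotaImage_PO_eq_O
    {X : Type*} [TopologicalSpace X] [CompactSpace X] [T2Space X]
    [TotallyDisconnectedSpace X]
    (F : X → Set X)
    (hFne : ∀ x, (F x).Nonempty) (hFcpt : ∀ x, IsCompact (F x)) (hFusc : USCSV F) :
    SVShadowing F ↔
      ∀ U : Set (Set X), IsClopenPartition U →
        ∃ V : Set (Set X), IsClopenPartition V ∧ Refines V U ∧
          ∀ W : Set (Set X), IsClopenPartition W → Refines W V →
            iotaImage U (POSet F W) = OSet F U := by
  constructor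
  · -- shadowing ⇒ combinatorial condition
    intro hsh U hU
    obtain ⟨V', hV', hshV'⟩ := hsh U (clopenPartition_isFOC hU)
    obtain ⟨W₀, hW₀, hW₀U, hW₀V'⟩ := isFOC_pairInter (clopenPartition_isFOC hU) hV'
    obtain ⟨V, hV, hVW₀⟩ := exists_clopen_partition_refines hW₀
    refine ⟨V, hV, refines_trans hVW₀ hW₀U, ?_⟩
    intro W hW hWV
    ext Us
    constructor
    · -- ι(PO(W)) ⊆ O(U)
      rintro ⟨hUsU, Ws, ⟨hWsW, hWspo⟩, hWsUs⟩
      choose x hxWs hxF using hWspo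
      have hpo : IsSVPseudoOrbit F V' x := by
        intro i
        obtain ⟨B, hB, hWB⟩ := refines_trans (refines_trans hWV hVW₀) hW₀V' _ (hWsW (i + 1))
        refine ⟨B, hB, (hxF i).mono (Set.inter_subset_inter_right _ hWB), hWB (hxWs (i + 1))⟩
      obtain ⟨z, hzorb, hzsh⟩ := hshV' x hpo
      have hz : ∀ i, z i ∈ Us i := by
        intro i
        obtain ⟨A, hA, hxA, hzA⟩ := hzsh i
        have : A = Us i := part_eq hU hA (hUsU i) hxA (hWsUs i (hxWs i))
        exact this ▸ hzA
      exact ⟨hUsU, z 0, mem_seqDisc_of_orbit F Us z hzorb hz⟩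
    · -- O(U) ⊆ ι(PO(W))
      rintro ⟨hUsU, x, hx⟩
      have hne : ∀ n, (tupleDisc F n Us).Nonempty :=
        fun n => ⟨x, Set.mem_iInter.1 hx n⟩
      obtain ⟨z, hzorb, hz⟩ := exists_orbit_of_tupleDisc F hFne hFcpt hFusc Us
        (fun i => (hU.2.1 _ (hUsU i)).1.1) hne
      have hzmem : ∀ i, ∃ A ∈ W, z i ∈ A := fun i => part_mem_exists hW (z i)
      choose Ws hWsW hzWs using hzmem
      refine ⟨hUsU, Ws, ⟨hWsW, fun i => ⟨z i, hzWs i, z (i + 1), hzorb i, hzWs (i + 1)⟩⟩, ?_⟩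
      intro i
      obtain ⟨A, hA, hWsA⟩ := refines_trans (refines_trans hWV hVW₀) hW₀U _ (hWsW i)
      have : A = Us i := part_eq hU hA (hUsU i) (hWsA (hzWs i)) (hz i)
      exact this ▸ hWsA
  · -- combinatorial condition ⇒ shadowing
    intro h U hUfoc
    obtain ⟨U₀, hU₀, hU₀U⟩ := exists_clopen_partition_refines hUfoc
    obtain ⟨V, hV, hVU₀, hprop⟩ := h U₀ hU₀
    refine ⟨V, clopenPartition_isFOC hV, ?_⟩
    intro x hx
    choose g hgV hgF hgx using hx
    obtain ⟨V₀, hV₀V, hxV₀⟩ := part_mem_exists hV (x 0)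
    set Vs : ℕ → Set X := fun i => match i with | 0 => V₀ | (n + 1) => g n with hVs
    have hVsV : ∀ i, Vs i ∈ V := by
      intro i
      match i with
      | 0 => exact hV₀V
      | (n + 1) => exact hgV n
    have hxVs : ∀ i, x i ∈ Vs i := by
      intro i
      match i with
      | 0 => exact hxV₀
      | (n + 1) => exact hgx n
    have hVspo : Vs ∈ POSet F V :=
      ⟨hVsV, fun i => ⟨x i, hxVs i, hgF i⟩⟩
    have hch : ∀ i, ∃ A ∈ U₀, Vs i ⊆ A := fun i => hVU₀ _ (hVsV i)
    choose Us hUsU₀ hVsUs using hch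
    have hUs : Us ∈ iotaImage U₀ (POSet F V) := ⟨hUsU₀, Vs, hVspo, hVsUs⟩
    rw [hprop V hV (refines_refl V)] at hUs
    obtain ⟨-, y, hy⟩ := hUs
    have hne : ∀ n, (tupleDisc F n Us).Nonempty :=
      fun n => ⟨y, Set.mem_iInter.1 hy n⟩
    obtain ⟨z, hzorb, hz⟩ := exists_orbit_of_tupleDisc F hFne hFcpt hFusc Us
      (fun i => (hU₀.2.1 _ (hUsU₀ i)).1.1) hne
    refine ⟨z, hzorb, fun i => ?_⟩
    obtain ⟨A, hA, hUsA⟩ := hU₀U _ (hUsU₀ i)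
    exact ⟨A, hA, hUsA (hVsUs i (hxVs i)), hUsA (hz i)⟩
end

section
/- Let F : X → 2^X be an upper semicontinuous set-valued map with the set-valued shadowing property on a compact totally disconnected Hausdorff space X, and let (U_λ)_{λ∈Λ} be a cofinal directed family in Part(X). Then: (1) the inverse limit system (lim←(O(U_λ), ι), lim← σ_λ) is conjugate to (lim←(PO(U_λ), ι), lim← σ_λ), where σ_λ is the shift and ι are the induced coordinatewise bonding maps; and (2) both inverse systems (ι, O(U_λ)) and (ι, PO(U_λ)) satisfy the Mittag-Leffler condition. -/
open Set Filter Metric Topology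

section Part

variable {X : Type*} [TopologicalSpace X]

/-- The coded version of `O(𝒰)` for a partition `𝒰 = {P k : k < N}`: sequences of codes
whose associated sequence of partition members is an orbit pattern (`[U_i] ≠ ∅`). -/
def OCode (F : X → Set X) (P : ℕ → Set X) (N : ℕ) : Set (ℕ → ℕ) :=
  {w | (∀ i, w i < N) ∧ (seqDisc F fun i => P (w i)).Nonempty}

/-- The coded version of `PO(𝒰)` for a partition `𝒰 = {P k : k < N}`: sequences of codes
whose associated sequence of partition members is a pseudo-orbit pattern
(`F(U_i) ∩ U_{i+1} ≠ ∅` for all `i`). -/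
def POCode (F : X → Set X) (P : ℕ → Set X) (N : ℕ) : Set (ℕ → ℕ) :=
  {w | (∀ i, w i < N) ∧ ∀ i, ∃ x ∈ P (w i), (F x ∩ P (w (i + 1))).Nonempty}

/-- The image, under the coordinatewise refinement bonding map `ι` from level `e` to
level `l`, of a set `S` of coded sequences over the partition of level `e`. -/
def iotaCodeImage (Pl : ℕ → Set X) (Nl : ℕ) (Pe : ℕ → Set X) (S : Set (ℕ → ℕ)) :
    Set (ℕ → ℕ) :=
  {w | (∀ i, w i < Nl) ∧ ∃ v ∈ S, ∀ i, Pe (v i) ⊆ Pl (w i)}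

/-- The inverse limit, over a directed family of partitions `P l`, of the spaces
`S l` of coded sequences, with the refinement bonding maps. -/
def limCode {Λ : Type*} [Preorder Λ] (P : Λ → ℕ → Set X) (S : ∀ _ : Λ, Set (ℕ → ℕ)) :
    Set (Λ → ℕ → ℕ) :=
  {u | (∀ l, u l ∈ S l) ∧ ∀ l e : Λ, l ≤ e → ∀ i, P e (u e i) ⊆ P l (u l i)}

end Part

/-
The image of `O(𝒱)` in `𝒰^ℕ`, for `𝒱` finer than `𝒰`, is the set of `𝒰`-patterns followed by
some orbit: compactness of the values `F x` and upper semicontinuity let a point of `[U_i]` be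
continued step by step to an orbit. This image does not depend on `𝒱`, which is the
Mittag-Leffler condition for `O`. Shadowing for the cover `𝒰` yields a cover `𝒱'`; once `𝒲`
refines `𝒱'`, a pseudo-orbit pattern of `𝒲` is followed by a `𝒱'`-pseudo-orbit, whose shadowing
orbit follows the projected `𝒰`-pattern. So `PO(𝒲)` and `O(𝒲)` have the same image in `𝒰^ℕ`;
this gives the Mittag-Leffler condition for `PO`, and shows that every thread of pseudo-orbit
patterns is a thread of orbit patterns, so the two inverse limits coincide and the identity is
the conjugacy.
-/

section SetValued

variable {X : Type*} {F : X → Set X}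

lemma Finv_mono {A B : Set X} (h : A ⊆ B) : Finv F A ⊆ Finv F B :=
  fun _ hx => hx.mono (inter_subset_inter_right _ h)

lemma tupleDisc_succ_subset :
    ∀ (n : ℕ) (U : ℕ → Set X), tupleDisc F (n + 1) U ⊆ tupleDisc F n U
  | 0, _ => inter_subset_left
  | n + 1, _ => inter_subset_inter_right _ (Finv_mono (tupleDisc_succ_subset n _))

lemma IsSVOrbit.tail {z : ℕ → X} (hz : IsSVOrbit F z) : IsSVOrbit F fun i => z (i + 1) :=
  fun i => hz (i + 1)

lemma IsSVOrbit.mem_tupleDisc :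
    ∀ (n : ℕ) {z : ℕ → X} {U : ℕ → Set X}, IsSVOrbit F z → (∀ i, z i ∈ U i) →
      z 0 ∈ tupleDisc F n U
  | 0, _, _, _, hU => hU 0
  | n + 1, z, _, hz, hU =>
    ⟨hU 0, z 1, hz 0, IsSVOrbit.mem_tupleDisc n hz.tail fun i => hU (i + 1)⟩

lemma IsSVOrbit.mem_seqDisc {z : ℕ → X} {U : ℕ → Set X} (hz : IsSVOrbit F z)
    (hU : ∀ i, z i ∈ U i) : z 0 ∈ seqDisc F U :=
  mem_iInter.mpr fun n => IsSVOrbit.mem_tupleDisc n hz hU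

variable [TopologicalSpace X]

lemma isClosed_Finv (hF : USCSV F) {A : Set X} (hA : IsClosed A) : IsClosed (Finv F A) := by
  refine isOpen_compl_iff.mp (isOpen_iff_forall_mem_open.mpr fun x hx => ?_)
  obtain ⟨V, hVo, hxV, hV⟩ := hF x Aᶜ hA.isOpen_compl fun y hy hyA => hx ⟨y, hy, hyA⟩
  exact ⟨V, fun y hy ⟨z, hzF, hzA⟩ => hV y hy hzF hzA, hVo, hxV⟩

lemma isClosed_tupleDisc (hF : USCSV F) :
    ∀ (n : ℕ) {U : ℕ → Set X}, (∀ i, IsClosed (U i)) → IsClosed (tupleDisc F n U)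
  | 0, _, hU => hU 0
  | n + 1, _, hU =>
    (hU 0).inter (isClosed_Finv hF (isClosed_tupleDisc hF n fun i => hU (i + 1)))

lemma exists_mem_mem_seqDisc_tail (hFcpt : ∀ x, IsCompact (F x)) (hF : USCSV F)
    {U : ℕ → Set X} (hU : ∀ i, IsClosed (U i)) {x : X} (hx : x ∈ seqDisc F U) :
    ∃ y ∈ F x, y ∈ seqDisc F fun i => U (i + 1) := by
  have hanti : Antitone fun n => tupleDisc F n fun i => U (i + 1) :=
    antitone_nat_of_succ_le fun n => tupleDisc_succ_subset n _
  by_contra! h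
  obtain ⟨n, hn⟩ := (hFcpt x).elim_directed_family_closed _
    (fun n => isClosed_tupleDisc hF n fun i => hU (i + 1))
    (eq_empty_of_forall_notMem fun y hy => h y hy.1 hy.2) hanti.directed_ge
  exact (mem_iInter.mp hx (n + 1)).2.ne_empty hn

lemma exists_orbit_of_seqDisc_nonempty (hFcpt : ∀ x, IsCompact (F x)) (hF : USCSV F)
    {U : ℕ → Set X} (hU : ∀ i, IsClosed (U i)) (h : (seqDisc F U).Nonempty) :
    ∃ z, IsSVOrbit F z ∧ ∀ i, z i ∈ U i := by
  obtain ⟨x₀, hx₀⟩ := h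
  have step : ∀ n, ∀ x ∈ seqDisc F (fun i => U (n + i)),
      ∃ y ∈ F x, y ∈ seqDisc F fun i => U (n + 1 + i) := by
    intro n x hx
    simpa only [add_assoc, add_comm 1] using
      exists_mem_mem_seqDisc_tail hFcpt hF (fun i => hU (n + i)) hx
  choose! next hnextF hnext using step
  let z : ℕ → X := fun n => Nat.rec (motive := fun _ => X) x₀ next n
  have hz : ∀ n, z n ∈ seqDisc F fun i => U (n + i) := by
    intro n
    induction n with
    | zero => simpa [z] using hx₀
    | succ n ih => exact hnext n _ ih
  exact ⟨z, fun n => hnextF n _ (hz n), fun n => mem_iInter.mp (hz n) 0⟩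

lemma seqDisc_nonempty_iff_exists_orbit (hFcpt : ∀ x, IsCompact (F x)) (hF : USCSV F)
    {U : ℕ → Set X} (hU : ∀ i, IsClosed (U i)) :
    (seqDisc F U).Nonempty ↔ ∃ z, IsSVOrbit F z ∧ ∀ i, z i ∈ U i :=
  ⟨exists_orbit_of_seqDisc_nonempty hFcpt hF hU, fun ⟨z, hz, hzU⟩ => ⟨z 0, hz.mem_seqDisc hzU⟩⟩

end SetValued

section Codes

variable {X : Type*} {F : X → Set X} {P Q : ℕ → Set X} {N M : ℕ}

lemma exists_code_of_iUnion_eq_univ (hcover : (⋃ (k : ℕ) (_ : k < N), P k) = univ) (x : X) :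
    ∃ k < N, x ∈ P k := by
  simpa using hcover.ge (mem_univ x)

lemma code_eq_of_mem (hdisj : ∀ j < N, ∀ k < N, j ≠ k → P j ∩ P k = ∅) {j k : ℕ}
    (hj : j < N) (hk : k < N) {x : X} (hxj : x ∈ P j) (hxk : x ∈ P k) : j = k := by
  by_contra hjk
  exact (hdisj j hj k hk hjk).subset ⟨hxj, hxk⟩

lemma iotaCodeImage_mono {S T : Set (ℕ → ℕ)} (h : S ⊆ T) :
    iotaCodeImage P N Q S ⊆ iotaCodeImage P N Q T :=
  fun _ ⟨hw, v, hv, hsub⟩ => ⟨hw, v, h hv, hsub⟩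

lemma exists_pseudoOrbit_of_mem_POCode {V : Set (Set X)} (hV : ∀ k < N, ∃ W ∈ V, P k ⊆ W)
    {v : ℕ → ℕ} (hv : v ∈ POCode F P N) : ∃ x, IsSVPseudoOrbit F V x ∧ ∀ i, x i ∈ P (v i) := by
  choose x hxP hxF using hv.2
  refine ⟨x, fun i => ?_, hxP⟩
  obtain ⟨W, hW, hPW⟩ := hV (v (i + 1)) (hv.1 (i + 1))
  exact ⟨W, hW, (hxF i).mono (inter_subset_inter_right _ hPW), hPW (hxP (i + 1))⟩

variable [TopologicalSpace X]

lemma isFOC_image_Iio (hopen : ∀ k < N, IsOpen (P k))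
    (hcover : (⋃ (k : ℕ) (_ : k < N), P k) = univ) : IsFOC (P '' Iio N) := by
  refine ⟨(finite_Iio N).image P, ?_, by simpa [sUnion_image] using hcover⟩
  rintro _ ⟨k, hk, rfl⟩
  exact hopen k hk

lemma mem_OCode_iff (hFcpt : ∀ x, IsCompact (F x)) (hF : USCSV F)
    (hclosed : ∀ k < N, IsClosed (P k)) {w : ℕ → ℕ} :
    w ∈ OCode F P N ↔ (∀ i, w i < N) ∧ ∃ z, IsSVOrbit F z ∧ ∀ i, z i ∈ P (w i) :=
  and_congr_right fun hw => seqDisc_nonempty_iff_exists_orbit hFcpt hF fun i => hclosed _ (hw i)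

lemma OCode_subset_POCode (hFcpt : ∀ x, IsCompact (F x)) (hF : USCSV F)
    (hclosed : ∀ k < N, IsClosed (P k)) : OCode F P N ⊆ POCode F P N := fun w hw => by
  obtain ⟨hwN, z, hz, hzw⟩ := (mem_OCode_iff hFcpt hF hclosed).mp hw
  exact ⟨hwN, fun i => ⟨z i, hzw i, z (i + 1), hz i, hzw (i + 1)⟩⟩

lemma shift_mem_OCode (hFcpt : ∀ x, IsCompact (F x)) (hF : USCSV F)
    (hclosed : ∀ k < N, IsClosed (P k)) {w : ℕ → ℕ} (hw : w ∈ OCode F P N) :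
    (fun i => w (i + 1)) ∈ OCode F P N := by
  obtain ⟨hwN, z, hz, hzw⟩ := (mem_OCode_iff hFcpt hF hclosed).mp hw
  exact (mem_OCode_iff hFcpt hF hclosed).mpr
    ⟨fun i => hwN (i + 1), _, hz.tail, fun i => hzw (i + 1)⟩

lemma mem_iotaCodeImage_OCode_iff (hFcpt : ∀ x, IsCompact (F x)) (hF : USCSV F)
    (hclosed : ∀ k < M, IsClosed (Q k)) (hcover : (⋃ (k : ℕ) (_ : k < M), Q k) = univ)
    (hdisj : ∀ j < N, ∀ k < N, j ≠ k → P j ∩ P k = ∅)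
    (hrefine : ∀ k < M, ∃ j < N, Q k ⊆ P j) {w : ℕ → ℕ} :
    w ∈ iotaCodeImage P N Q (OCode F Q M) ↔
      (∀ i, w i < N) ∧ ∃ z, IsSVOrbit F z ∧ ∀ i, z i ∈ P (w i) := by
  refine and_congr_right fun hw => ⟨fun ⟨v, hv, hvw⟩ => ?_, fun ⟨z, hz, hzw⟩ => ?_⟩
  · obtain ⟨-, z, hz, hzv⟩ := (mem_OCode_iff hFcpt hF hclosed).mp hv
    exact ⟨z, hz, fun i => hvw i (hzv i)⟩
  · choose c hcM hzc using fun i => exists_code_of_iUnion_eq_univ hcover (z i)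
    refine ⟨c, (mem_OCode_iff hFcpt hF hclosed).mpr ⟨hcM, z, hz, hzc⟩, fun i => ?_⟩
    obtain ⟨j, hj, hQP⟩ := hrefine (c i) (hcM i)
    rwa [← code_eq_of_mem hdisj hj (hw i) (hQP (hzc i)) (hzw i)]

lemma exists_isFOC_forall_mem_iotaCodeImage_POCode (hshad : SVShadowing F)
    (hopen : ∀ k < N, IsOpen (P k)) (hcover : (⋃ (k : ℕ) (_ : k < N), P k) = univ)
    (hdisj : ∀ j < N, ∀ k < N, j ≠ k → P j ∩ P k = ∅) :
    ∃ V : Set (Set X), IsFOC V ∧ ∀ (Q : ℕ → Set X) (M : ℕ), (∀ k < M, ∃ W ∈ V, Q k ⊆ W) →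
      ∀ w ∈ iotaCodeImage P N Q (POCode F Q M), ∃ z, IsSVOrbit F z ∧ ∀ i, z i ∈ P (w i) := by
  obtain ⟨V, hV, hshadV⟩ := hshad _ (isFOC_image_Iio hopen hcover)
  refine ⟨V, hV, fun Q M hQV w ⟨hw, v, hv, hvw⟩ => ?_⟩
  obtain ⟨x, hx, hxv⟩ := exists_pseudoOrbit_of_mem_POCode hQV hv
  obtain ⟨z, hz, hxz⟩ := hshadV x hx
  refine ⟨z, hz, fun i => ?_⟩
  obtain ⟨_, ⟨k, hk, rfl⟩, hxk, hzk⟩ := hxz i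
  rwa [← code_eq_of_mem hdisj hk (hw i) hxk (hvw i (hxv i))]

end Codes

open TopologicalSpace in
lemma IsFOC.exists_clopenPartition_refining {X : Type*} [TopologicalSpace X] [CompactSpace X]
    [T2Space X] [TotallyDisconnectedSpace X] {V : Set (Set X)} (hV : IsFOC V) :
    ∃ U : Set (Set X), IsClopenPartition U ∧ ∀ W ∈ U, ∃ W' ∈ V, W ⊆ W' := by
  obtain ⟨-, hopen, hcover⟩ := hV
  have hV' : IsOpenCover fun W : V => (⟨W, hopen W W.2⟩ : Opens X) :=
    .of_sets _ (by rwa [← sUnion_eq_iUnion])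
  obtain ⟨n, C, hC, hCcover, hCdisj⟩ := hV'.exists_finite_nonempty_disjoint_clopen_cover
  refine ⟨range fun j => (C j : Set X), ⟨finite_range _, ?_, ?_, ?_⟩, ?_⟩
  · rintro _ ⟨j, rfl⟩
    exact ⟨(C j).isClopen, nonempty_iff_ne_empty.mpr fun h => (hC j).1 (SetLike.coe_injective h)⟩
  · simpa [sUnion_range] using hCcover
  · rintro _ ⟨i, rfl⟩ _ ⟨j, rfl⟩ hij
    exact disjoint_iff_inter_eq_empty.mp
      (Clopens.coe_disjoint.mpr (hCdisj fun h => hij (h ▸ rfl)))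
  · rintro _ ⟨j, rfl⟩
    obtain ⟨⟨W, hW⟩, hCW⟩ := (hC j).2
    exact ⟨W, hW, hCW⟩

section Levels

variable {X : Type*} {F : X → Set X} {Λ : Type*} [Preorder Λ] {P : Λ → ℕ → Set X} {N : Λ → ℕ}

lemma limCode_mono {S T : Λ → Set (ℕ → ℕ)} (h : ∀ l, S l ⊆ T l) : limCode P S ⊆ limCode P T :=
  fun _ ⟨hu, hcompat⟩ => ⟨fun l => h l (hu l), hcompat⟩

variable [TopologicalSpace X]

lemma iotaCodeImage_OCode_eq (hFcpt : ∀ x, IsCompact (F x)) (hF : USCSV F)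
    (hclosed : ∀ l : Λ, ∀ k < N l, IsClosed (P l k))
    (hcover : ∀ l : Λ, (⋃ (k : ℕ) (_ : k < N l), P l k) = univ)
    (hdisj : ∀ l : Λ, ∀ j < N l, ∀ k < N l, j ≠ k → P l j ∩ P l k = ∅)
    (hrefine : ∀ l e : Λ, l ≤ e → ∀ k < N e, ∃ j < N l, P e k ⊆ P l j)
    {l e m : Λ} (hle : l ≤ e) (hlm : l ≤ m) :
    iotaCodeImage (P l) (N l) (P e) (OCode F (P e) (N e)) =
      iotaCodeImage (P l) (N l) (P m) (OCode F (P m) (N m)) := by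
  ext w
  rw [mem_iotaCodeImage_OCode_iff hFcpt hF (hclosed e) (hcover e) (hdisj l) (hrefine l e hle),
    mem_iotaCodeImage_OCode_iff hFcpt hF (hclosed m) (hcover m) (hdisj l) (hrefine l m hlm)]

lemma shift_mem_limCode_OCode (hFcpt : ∀ x, IsCompact (F x)) (hF : USCSV F)
    (hclosed : ∀ l : Λ, ∀ k < N l, IsClosed (P l k)) {u : Λ → ℕ → ℕ}
    (hu : u ∈ limCode P fun l => OCode F (P l) (N l)) :
    (fun l i => u l (i + 1)) ∈ limCode P fun l => OCode F (P l) (N l) :=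
  ⟨fun l => shift_mem_OCode hFcpt hF (hclosed l) (hu.1 l), fun l e hle i => hu.2 l e hle (i + 1)⟩

section Shadowing

variable [CompactSpace X] [T2Space X] [TotallyDisconnectedSpace X] [IsDirected Λ (· ≤ ·)]

lemma exists_le_forall_le_subset_of_isFOC
    (hrefine : ∀ l e : Λ, l ≤ e → ∀ k < N e, ∃ j < N l, P e k ⊆ P l j)
    (hcofinal : ∀ U : Set (Set X), IsClopenPartition U →
      ∃ l : Λ, ∀ k < N l, ∃ W ∈ U, P l k ⊆ W)
    {V : Set (Set X)} (hV : IsFOC V) (l : Λ) :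
    ∃ e, l ≤ e ∧ ∀ m, e ≤ m → ∀ k < N m, ∃ W ∈ V, P m k ⊆ W := by
  obtain ⟨U, hU, hUV⟩ := hV.exists_clopenPartition_refining
  obtain ⟨l', hl'U⟩ := hcofinal U hU
  obtain ⟨e, hle, hl'e⟩ := directed_of (· ≤ ·) l l'
  refine ⟨e, hle, fun m hem k hk => ?_⟩
  obtain ⟨j, hj, hkj⟩ := hrefine l' m (hl'e.trans hem) k hk
  obtain ⟨W, hW, hjW⟩ := hl'U j hj
  obtain ⟨W', hW', hWW'⟩ := hUV W hW
  exact ⟨W', hW', hkj.trans (hjW.trans hWW')⟩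

lemma exists_le_forall_le_iotaCodeImage_POCode_eq (hFcpt : ∀ x, IsCompact (F x))
    (hF : USCSV F) (hshad : SVShadowing F) (hclopen : ∀ l : Λ, ∀ k < N l, IsClopen (P l k))
    (hcover : ∀ l : Λ, (⋃ (k : ℕ) (_ : k < N l), P l k) = univ)
    (hdisj : ∀ l : Λ, ∀ j < N l, ∀ k < N l, j ≠ k → P l j ∩ P l k = ∅)
    (hrefine : ∀ l e : Λ, l ≤ e → ∀ k < N e, ∃ j < N l, P e k ⊆ P l j)
    (hcofinal : ∀ U : Set (Set X), IsClopenPartition U →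
      ∃ l : Λ, ∀ k < N l, ∃ W ∈ U, P l k ⊆ W) (l : Λ) :
    ∃ e, l ≤ e ∧ ∀ m, e ≤ m →
      iotaCodeImage (P l) (N l) (P m) (POCode F (P m) (N m)) =
        iotaCodeImage (P l) (N l) (P m) (OCode F (P m) (N m)) := by
  obtain ⟨V, hV, hVorbit⟩ := exists_isFOC_forall_mem_iotaCodeImage_POCode hshad
    (fun k hk => (hclopen l k hk).isOpen) (hcover l) (hdisj l)
  obtain ⟨e, hle, heV⟩ := exists_le_forall_le_subset_of_isFOC hrefine hcofinal hV l
  have hclosed m : ∀ k < N m, IsClosed (P m k) := fun k hk => (hclopen m k hk).isClosed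
  refine ⟨e, hle, fun m hem => Subset.antisymm (fun w hw => ?_)
    (iotaCodeImage_mono (OCode_subset_POCode hFcpt hF (hclosed m)))⟩
  exact (mem_iotaCodeImage_OCode_iff hFcpt hF (hclosed m) (hcover m) (hdisj l)
    (hrefine l m (hle.trans hem))).mpr ⟨hw.1, hVorbit _ _ (heV m hem) w hw⟩

lemma limCode_POCode_subset_OCode (hFcpt : ∀ x, IsCompact (F x))
    (hF : USCSV F) (hshad : SVShadowing F) (hclopen : ∀ l : Λ, ∀ k < N l, IsClopen (P l k))
    (hcover : ∀ l : Λ, (⋃ (k : ℕ) (_ : k < N l), P l k) = univ)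
    (hdisj : ∀ l : Λ, ∀ j < N l, ∀ k < N l, j ≠ k → P l j ∩ P l k = ∅)
    (hrefine : ∀ l e : Λ, l ≤ e → ∀ k < N e, ∃ j < N l, P e k ⊆ P l j)
    (hcofinal : ∀ U : Set (Set X), IsClopenPartition U →
      ∃ l : Λ, ∀ k < N l, ∃ W ∈ U, P l k ⊆ W) :
    (limCode P fun l => POCode F (P l) (N l)) ⊆ limCode P fun l => OCode F (P l) (N l) := by
  rintro u ⟨hu, hcompat⟩
  refine ⟨fun l => ?_, hcompat⟩
  obtain ⟨e, hle, he⟩ := exists_le_forall_le_iotaCodeImage_POCode_eq hFcpt hF hshad hclopen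
    hcover hdisj hrefine hcofinal l
  have hclosed m : ∀ k < N m, IsClosed (P m k) := fun k hk => (hclopen m k hk).isClosed
  have hul : u l ∈ iotaCodeImage (P l) (N l) (P e) (OCode F (P e) (N e)) :=
    he e le_rfl ▸ ⟨(hu l).1, u e, hu e, hcompat l e hle⟩
  exact (mem_OCode_iff hFcpt hF (hclosed l)).mpr
    ((mem_iotaCodeImage_OCode_iff hFcpt hF (hclosed e) (hcover e) (hdisj l)
      (hrefine l e hle)).mp hul)

end Shadowing

end Levels

theorem limO_conj_limPO_and_ML_general
    {X : Type*} [TopologicalSpace X] [CompactSpace X] [T2Space X]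
    [TotallyDisconnectedSpace X]
    (F : X → Set X)
    (hFcpt : ∀ x, IsCompact (F x)) (hFusc : USCSV F)
    (hshad : SVShadowing F)
    {Λ : Type*} [Preorder Λ] [IsDirected Λ (· ≤ ·)]
    (P : Λ → ℕ → Set X) (N : Λ → ℕ)
    (hclopen : ∀ l : Λ, ∀ k < N l, IsClopen (P l k) ∧ (P l k).Nonempty)
    (hcover : ∀ l : Λ, (⋃ (k : ℕ) (_ : k < N l), P l k) = Set.univ)
    (hdisj : ∀ l : Λ, ∀ j < N l, ∀ k < N l, j ≠ k → P l j ∩ P l k = ∅)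
    (hrefine : ∀ l e : Λ, l ≤ e → ∀ k < N e, ∃ j < N l, P e k ⊆ P l j)
    (hcofinal : ∀ U : Set (Set X), IsClopenPartition U →
      ∃ l : Λ, ∀ k < N l, ∃ W ∈ U, P l k ⊆ W) :
    (∃ h : ↥(limCode P fun l => OCode F (P l) (N l)) ≃ₜ
        ↥(limCode P fun l => POCode F (P l) (N l)),
      ∀ u : ↥(limCode P fun l => OCode F (P l) (N l)),
        ∃ hm : (fun (l : Λ) (i : ℕ) => (u : Λ → ℕ → ℕ) l (i + 1)) ∈
            (limCode P fun l => OCode F (P l) (N l)),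
          ((h ⟨fun l i => (u : Λ → ℕ → ℕ) l (i + 1), hm⟩ :
              ↥(limCode P fun l => POCode F (P l) (N l))) : Λ → ℕ → ℕ)
            = fun l i => ((h u : ↥(limCode P fun l => POCode F (P l) (N l))) : Λ → ℕ → ℕ)
                l (i + 1)) ∧
    (∀ l : Λ, ∃ e : Λ, l ≤ e ∧ ∀ m : Λ, e ≤ m →
      iotaCodeImage (P l) (N l) (P e) (OCode F (P e) (N e))
        = iotaCodeImage (P l) (N l) (P m) (OCode F (P m) (N m))) ∧
    (∀ l : Λ, ∃ e : Λ, l ≤ e ∧ ∀ m : Λ, e ≤ m →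
      iotaCodeImage (P l) (N l) (P e) (POCode F (P e) (N e))
        = iotaCodeImage (P l) (N l) (P m) (POCode F (P m) (N m))) := by
  have hPclopen l : ∀ k < N l, IsClopen (P l k) := fun k hk => (hclopen l k hk).1
  have hPclosed l : ∀ k < N l, IsClosed (P l k) := fun k hk => (hPclopen l k hk).isClosed
  have himage {l e m : Λ} (hle : l ≤ e) (hlm : l ≤ m) :=
    iotaCodeImage_OCode_eq hFcpt hFusc hPclosed hcover hdisj hrefine hle hlm
  have hlim :
      (limCode P fun l => OCode F (P l) (N l)) = limCode P fun l => POCode F (P l) (N l) :=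
    (limCode_mono fun l => OCode_subset_POCode hFcpt hFusc (hPclosed l)).antisymm
      (limCode_POCode_subset_OCode hFcpt hFusc hshad hPclopen hcover hdisj hrefine hcofinal)
  refine ⟨⟨Homeomorph.setCongr hlim, fun u => ⟨shift_mem_limCode_OCode hFcpt hFusc hPclosed u.2,
    rfl⟩⟩, fun l => ⟨l, le_rfl, fun m hm => himage le_rfl hm⟩, fun l => ?_⟩
  obtain ⟨e, hle, he⟩ := exists_le_forall_le_iotaCodeImage_POCode_eq hFcpt hFusc hshad hPclopen
    hcover hdisj hrefine hcofinal l
  exact ⟨e, hle, fun m hem => by rw [he e le_rfl, he m hem, himage hle (hle.trans hem)]⟩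

/-- Theorem 5.6: for an usc set-valued map with the set-valued shadowing
property on a compact totally disconnected Hausdorff space and a cofinal directed family
of finite clopen partitions `(𝒰_λ)`, (1) the inverse limit of the orbit-pattern systems
`(O(𝒰_λ), σ)` is conjugate to the inverse limit of the pseudo-orbit-pattern systems
`(PO(𝒰_λ), σ)`, and (2) both inverse systems satisfy the Mittag-Leffler condition.
(Partitions are coded: the partition `𝒰_λ` is `{P λ k : k < N λ}`.) -/
theorem limO_conj_limPO_and_ML
    {X : Type*} [TopologicalSpace X] [CompactSpace X] [T2Space X]
    [TotallyDisconnectedSpace X]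
    (F : X → Set X)
    (hFne : ∀ x, (F x).Nonempty) (hFcpt : ∀ x, IsCompact (F x)) (hFusc : USCSV F)
    (hshad : SVShadowing F)
    {Λ : Type*} [Preorder Λ] [IsDirected Λ (· ≤ ·)]
    (P : Λ → ℕ → Set X) (N : Λ → ℕ)
    (hclopen : ∀ l : Λ, ∀ k < N l, IsClopen (P l k) ∧ (P l k).Nonempty)
    (hcover : ∀ l : Λ, (⋃ (k : ℕ) (_ : k < N l), P l k) = Set.univ)
    (hdisj : ∀ l : Λ, ∀ j < N l, ∀ k < N l, j ≠ k → P l j ∩ P l k = ∅)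
    (hrefine : ∀ l e : Λ, l ≤ e → ∀ k < N e, ∃ j < N l, P e k ⊆ P l j)
    (hcofinal : ∀ U : Set (Set X), IsClopenPartition U →
      ∃ l : Λ, ∀ k < N l, ∃ W ∈ U, P l k ⊆ W) :
    (∃ h : ↥(limCode P fun l => OCode F (P l) (N l)) ≃ₜ
        ↥(limCode P fun l => POCode F (P l) (N l)),
      ∀ u : ↥(limCode P fun l => OCode F (P l) (N l)),
        ∃ hm : (fun (l : Λ) (i : ℕ) => (u : Λ → ℕ → ℕ) l (i + 1)) ∈
            (limCode P fun l => OCode F (P l) (N l)),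
          ((h ⟨fun l i => (u : Λ → ℕ → ℕ) l (i + 1), hm⟩ :
              ↥(limCode P fun l => POCode F (P l) (N l))) : Λ → ℕ → ℕ)
            = fun l i => ((h u : ↥(limCode P fun l => POCode F (P l) (N l))) : Λ → ℕ → ℕ)
                l (i + 1)) ∧
    (∀ l : Λ, ∃ e : Λ, l ≤ e ∧ ∀ m : Λ, e ≤ m →
      iotaCodeImage (P l) (N l) (P e) (OCode F (P e) (N e))
        = iotaCodeImage (P l) (N l) (P m) (OCode F (P m) (N m))) ∧
    (∀ l : Λ, ∃ e : Λ, l ≤ e ∧ ∀ m : Λ, e ≤ m →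
      iotaCodeImage (P l) (N l) (P e) (POCode F (P e) (N e))
        = iotaCodeImage (P l) (N l) (P m) (POCode F (P m) (N m))) :=
  limO_conj_limPO_and_ML_general F hFcpt hFusc hshad P N hclopen hcover hdisj hrefine hcofinal
end

section
/- Let X be a compact totally disconnected Hausdorff space and F : X → 2^X an upper semicontinuous set-valued map with the set-valued shadowing property. Then the orbit system (Orb_F(X), σ_F) has the single-valued shadowing property: for every finite open cover U of Orb_F(X) there is a finite open cover V of Orb_F(X) such that every V-pseudo-orbit of σ_F (a sequence (w_i) in Orb_F(X) such that for each i, σ_F(w_i) and w_{i+1} lie in a common member of V) is U-shadowed by an actual σ_F-orbit (a sequence (σ_F^i(z))_{i∈ℕ} such that for each i some member of U contains both w_i and σ_F^i(z)). -/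
open Set Filter Metric Topology

/-- The shift map `σ_F` on the orbit space of a set-valued system. -/
def sigmaF {X : Type*} [TopologicalSpace X] (F : X → Set X) :
    ↥(svOrbitSet F) → ↥(svOrbitSet F) :=
  fun w => ⟨fun i => (w : ℕ → X) (i + 1), fun i => w.2 (i + 1)⟩

section Aux

variable {X : Type*} [TopologicalSpace X]

lemma isClosed_svOrbitSet_s18 [T2Space X] {F : X → Set X}
    (hFcpt : ∀ x, IsCompact (F x)) (hFusc : USCSV F) :
    IsClosed (svOrbitSet F) := by
  rw [← isOpen_compl_iff, isOpen_iff_forall_mem_open]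
  intro w hw
  simp only [mem_compl_iff, svOrbitSet, mem_setOf_eq, not_forall] at hw
  obtain ⟨i, hi⟩ := hw
  obtain ⟨A, Bs, hA, hBs, hFA, hwB, hAB⟩ :=
    SeparatedNhds.of_isCompact_isCompact (hFcpt (w i)) isCompact_singleton
      (by simpa [Set.disjoint_singleton_right] using hi)
  obtain ⟨Vs, hVopen, hwV, hV⟩ := hFusc (w i) A hA hFA
  refine ⟨{v : ℕ → X | v i ∈ Vs ∧ v (i + 1) ∈ Bs}, ?_, ?_, hwV, hwB rfl⟩
  · intro v hv hvmem
    have h1 : v (i + 1) ∈ F (v i) := hvmem i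
    have h2 : F (v i) ⊆ A := hV (v i) hv.1
    exact absurd (h2 h1) (fun hvA => Set.disjoint_left.mp hAB hvA hv.2)
  · exact (hVopen.preimage (continuous_apply i)).inter (hBs.preimage (continuous_apply (i + 1)))

lemma sigmaF_iterate_apply (F : X → Set X) :
    ∀ (i : ℕ) (z : ↥(svOrbitSet F)) (j : ℕ),
      ((((sigmaF F)^[i] z) : ℕ → X)) j = (z : ℕ → X) (i + j)
  | 0, z, j => by simp
  | (i + 1), z, j => by
      rw [Function.iterate_succ_apply, sigmaF_iterate_apply F i (sigmaF F z) j]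
      show (z : ℕ → X) (i + j + 1) = (z : ℕ → X) (i + 1 + j)
      rw [Nat.add_right_comm i 1 j]

lemma exists_clopen_cyl [CompactSpace X] [T2Space X] [TotallyDisconnectedSpace X]
    {O : Set (ℕ → X)} (hO : IsOpen O) {w : ℕ → X} (hw : w ∈ O) :
    ∃ (m : ℕ) (C : ℕ → Set X), (∀ j, IsClopen (C j)) ∧ (∀ j, w j ∈ C j) ∧
      {v : ℕ → X | ∀ j < m, v j ∈ C j} ⊆ O := by
  obtain ⟨I, u, hu, hsub⟩ := isOpen_pi_iff.mp hO w hw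
  have key : ∀ j : ℕ, ∃ Cj : Set X, IsClopen Cj ∧ w j ∈ Cj ∧ (j ∈ I → Cj ⊆ u j) := by
    intro j
    by_cases hj : j ∈ I
    · obtain ⟨Cj, h1, h2, h3⟩ := compact_exists_isClopen_in_isOpen (hu j hj).1 (hu j hj).2
      exact ⟨Cj, h1, h2, fun _ => h3⟩
    · exact ⟨Set.univ, isClopen_univ, trivial, fun h => absurd h hj⟩
  choose C hCcl hCmem hCsub using key
  refine ⟨I.sup id + 1, C, hCcl, hCmem, ?_⟩
  intro v hv
  apply hsub
  intro j hj
  have hjlt : j < I.sup id + 1 := Nat.lt_succ_of_le (Finset.le_sup (f := id) hj)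
  exact hCsub j hj (hv j hjlt)

lemma isFOC_cells {S : Set (Set X)} (hfin : S.Finite) (hcl : ∀ A ∈ S, IsClopen A) :
    IsFOC (Set.range (fun p : ↥S → Prop => {y : X | ∀ A : ↥S, p A ↔ y ∈ (A : Set X)})) := by
  haveI := hfin.to_subtype
  refine ⟨Set.finite_range _, ?_, ?_⟩
  · rintro W ⟨p, rfl⟩
    have he : {y : X | ∀ A : ↥S, p A ↔ y ∈ (A : Set X)}
        = ⋂ A : ↥S, {y | p A ↔ y ∈ (A : Set X)} := by
      ext y; simp [Set.mem_iInter]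
    show IsOpen {y : X | ∀ A : ↥S, p A ↔ y ∈ (A : Set X)}
    rw [he]
    refine isOpen_iInter_of_finite fun A => ?_
    by_cases hp : p A
    · have : {y : X | p A ↔ y ∈ (A : Set X)} = (A : Set X) := by ext y; simp [hp]
      rw [this]; exact (hcl A A.2).isOpen
    · have : {y : X | p A ↔ y ∈ (A : Set X)} = (A : Set X)ᶜ := by ext y; simp [hp]
      rw [this]; exact (hcl A A.2).compl.isOpen
  · apply Set.eq_univ_of_forall
    intro y
    exact ⟨_, ⟨fun A : ↥S => y ∈ (A : Set X), rfl⟩, fun A => Iff.rfl⟩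

end Aux

/-- Theorem 6.10: if an usc set-valued map on a compact totally
disconnected Hausdorff space has the set-valued shadowing property, then its orbit system
`(Orb_F(X), σ_F)` has the single-valued shadowing property. -/
theorem orbitSystem_shadowing_of_svShadowing
    {X : Type*} [TopologicalSpace X] [CompactSpace X] [T2Space X] [TotallyDisconnectedSpace X]
    (F : X → Set X)
    (hFne : ∀ x, (F x).Nonempty) (hFcpt : ∀ x, IsCompact (F x)) (hFusc : USCSV F)
    (hshad : SVShadowing F) :
    ∀ U : Set (Set ↥(svOrbitSet F)), IsFOC U →
      ∃ V : Set (Set ↥(svOrbitSet F)), IsFOC V ∧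
        ∀ w : ℕ → ↥(svOrbitSet F),
          (∀ i, ∃ W ∈ V, sigmaF F (w i) ∈ W ∧ w (i + 1) ∈ W) →
          ∃ z : ↥(svOrbitSet F), ∀ i, ∃ W ∈ U, w i ∈ W ∧ (sigmaF F)^[i] z ∈ W := by
  intro U hU
  obtain ⟨hUfin, hUopen, hUcov⟩ := hU
  have hclosed : IsClosed (svOrbitSet F) := isClosed_svOrbitSet_s18 hFcpt hFusc
  haveI : CompactSpace ↥(svOrbitSet F) := isCompact_iff_compactSpace.mp hclosed.isCompact
  -- Step 1: refine U by clopen cylinders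
  have key : ∀ w : ↥(svOrbitSet F), ∃ (m : ℕ) (C : ℕ → Set X) (W : Set ↥(svOrbitSet F)),
      W ∈ U ∧ (∀ j, IsClopen (C j)) ∧ (∀ j, (w : ℕ → X) j ∈ C j) ∧
      {v : ↥(svOrbitSet F) | ∀ j < m, (v : ℕ → X) j ∈ C j} ⊆ W := by
    intro w
    have hwU : (w : ↥(svOrbitSet F)) ∈ ⋃₀ U := hUcov.symm ▸ Set.mem_univ w
    obtain ⟨W, hWU, hwW⟩ := hwU
    obtain ⟨O, hO, hOW⟩ := isOpen_induced_iff.mp (hUopen W hWU)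
    have hwO : (w : ℕ → X) ∈ O := by rw [← hOW] at hwW; exact hwW
    obtain ⟨m, C, hCcl, hCmem, hsub⟩ := exists_clopen_cyl hO hwO
    refine ⟨m, C, W, hWU, hCcl, hCmem, ?_⟩
    intro v hv
    rw [← hOW]
    exact hsub hv
  choose m C Wsel hWU hCcl hCmem hsub using key
  have hBopen : ∀ s : ↥(svOrbitSet F),
      IsOpen {v : ↥(svOrbitSet F) | ∀ j < m s, (v : ℕ → X) j ∈ C s j} := by
    intro s
    have he : {v : ↥(svOrbitSet F) | ∀ j < m s, (v : ℕ → X) j ∈ C s j}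
        = ⋂ j ∈ Finset.range (m s),
            (fun v : ↥(svOrbitSet F) => (v : ℕ → X) j) ⁻¹' (C s j) := by
      ext v; simp [Finset.mem_range]
    rw [he]
    exact isOpen_biInter_finset fun j _ =>
      ((hCcl s j).isOpen).preimage ((continuous_apply j).comp continuous_subtype_val)
  obtain ⟨t, ht⟩ := isCompact_univ.elim_finite_subcover
    (fun s : ↥(svOrbitSet F) => {v : ↥(svOrbitSet F) | ∀ j < m s, (v : ℕ → X) j ∈ C s j})
    hBopen (fun v _ => mem_iUnion.mpr ⟨v, fun j _ => hCmem v j⟩)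
  set n : ℕ := t.sup m with hn
  set S1 : Set (Set X) := ⋃ s ∈ t, C s '' Set.Iio (m s) with hS1
  have hS1fin : S1.Finite :=
    Set.Finite.biUnion t.finite_toSet fun s _ => (Set.finite_Iio _).image _
  have hS1cl : ∀ A ∈ S1, IsClopen A := by
    intro A hA
    simp only [hS1, mem_iUnion, Set.mem_image] at hA
    obtain ⟨s, _, j, _, rfl⟩ := hA
    exact hCcl s j
  haveI := hS1fin.to_subtype
  -- the cover of X by S1-cells
  obtain ⟨V0, hV0FOC, hV0shad⟩ := hshad
    (Set.range (fun p : ↥S1 → Prop => {y : X | ∀ A : ↥S1, p A ↔ y ∈ (A : Set X)}))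
    (isFOC_cells hS1fin hS1cl)
  obtain ⟨hV0fin, hV0open, hV0cov⟩ := hV0FOC
  -- clopen refinement of V0 covering X
  have keyD : ∀ y : X, ∃ D : Set X, IsClopen D ∧ y ∈ D ∧ ∃ W ∈ V0, D ⊆ W := by
    intro y
    have hy : y ∈ ⋃₀ V0 := hV0cov.symm ▸ Set.mem_univ y
    obtain ⟨W, hWV0, hyW⟩ := hy
    obtain ⟨D, hDcl, hyD, hDW⟩ := compact_exists_isClopen_in_isOpen (hV0open W hWV0) hyW
    exact ⟨D, hDcl, hyD, W, hWV0, hDW⟩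
  choose D hDcl hDmem hDref using keyD
  obtain ⟨tD, htD⟩ := isCompact_univ.elim_finite_subcover (fun y => D y)
    (fun y => (hDcl y).isOpen) (fun y _ => mem_iUnion.mpr ⟨y, hDmem y⟩)
  set S : Set (Set X) := S1 ∪ ⋃ y ∈ tD, {D y} with hS
  have hSfin : S.Finite :=
    hS1fin.union (Set.Finite.biUnion tD.finite_toSet fun _ _ => Set.finite_singleton _)
  have hScl : ∀ A ∈ S, IsClopen A := by
    intro A hA
    rcases hA with hA | hA
    · exact hS1cl A hA
    · simp only [mem_iUnion, mem_singleton_iff] at hA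
      obtain ⟨y, _, rfl⟩ := hA
      exact hDcl y
  haveI := hSfin.to_subtype
  refine ⟨Set.range (fun q : Fin (n + 1) → ↥S → Prop =>
      {v : ↥(svOrbitSet F) | ∀ (j : Fin (n + 1)) (A : ↥S),
        q j A ↔ (v : ℕ → X) j ∈ (A : Set X)}), ⟨Set.finite_range _, ?_, ?_⟩, ?_⟩
  · rintro W ⟨q, rfl⟩
    show IsOpen {v : ↥(svOrbitSet F) | ∀ (j : Fin (n + 1)) (A : ↥S),
        q j A ↔ (v : ℕ → X) j ∈ (A : Set X)}
    have he : {v : ↥(svOrbitSet F) | ∀ (j : Fin (n + 1)) (A : ↥S),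
        q j A ↔ (v : ℕ → X) j ∈ (A : Set X)}
        = ⋂ (j : Fin (n + 1)) (A : ↥S),
            {v : ↥(svOrbitSet F) | q j A ↔ (v : ℕ → X) j ∈ (A : Set X)} := by
      ext v; simp [Set.mem_iInter]
    rw [he]
    refine isOpen_iInter_of_finite fun j => isOpen_iInter_of_finite fun A => ?_
    have hc : Continuous (fun v : ↥(svOrbitSet F) => (v : ℕ → X) (j : ℕ)) :=
      (continuous_apply (j : ℕ)).comp continuous_subtype_val
    by_cases hq : q j A
    · have : {v : ↥(svOrbitSet F) | q j A ↔ (v : ℕ → X) j ∈ (A : Set X)}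
          = (fun v : ↥(svOrbitSet F) => (v : ℕ → X) (j : ℕ)) ⁻¹' (A : Set X) := by
        ext v; simp [hq]
      rw [this]; exact (hScl A A.2).isOpen.preimage hc
    · have : {v : ↥(svOrbitSet F) | q j A ↔ (v : ℕ → X) j ∈ (A : Set X)}
          = (fun v : ↥(svOrbitSet F) => (v : ℕ → X) (j : ℕ)) ⁻¹' (A : Set X)ᶜ := by
        ext v; simp [hq]
      rw [this]; exact (hScl A A.2).compl.isOpen.preimage hc
  · apply Set.eq_univ_of_forall
    intro v
    exact ⟨_, ⟨fun j A => (v : ℕ → X) j ∈ (A : Set X), rfl⟩, fun j A => Iff.rfl⟩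
  · intro w hw
    -- (a): consecutive trace compatibility
    have ha : ∀ i : ℕ, ∀ j : ℕ, j ≤ n → ∀ A ∈ S,
        ((w i : ℕ → X) (j + 1) ∈ A ↔ (w (i + 1) : ℕ → X) j ∈ A) := by
      intro i j hj A hA
      obtain ⟨W, hWV, h1, h2⟩ := hw i
      obtain ⟨q, rfl⟩ := hWV
      have e1 := h1 ⟨j, by omega⟩ ⟨A, hA⟩
      have e2 := h2 ⟨j, by omega⟩ ⟨A, hA⟩
      exact e1.symm.trans e2
    set x : ℕ → X := fun i => (w i : ℕ → X) 0 with hx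
    have hxpo : IsSVPseudoOrbit F V0 x := by
      intro i
      have hx1 : x (i + 1) ∈ ⋃ y ∈ tD, D y := htD (Set.mem_univ _)
      obtain ⟨y, hy, hmemD⟩ := mem_iUnion₂.mp hx1
      obtain ⟨W, hWV0, hDW⟩ := hDref y
      have hDS : D y ∈ S := Or.inr (mem_iUnion₂.mpr ⟨y, hy, rfl⟩)
      refine ⟨W, hWV0, ⟨(w i : ℕ → X) 1, (w i).2 0, ?_⟩, hDW hmemD⟩
      exact hDW ((ha i 0 (Nat.zero_le n) (D y) hDS).mpr hmemD)
    obtain ⟨z, hzorb, hzsh⟩ := hV0shad x hxpo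
    have hc : ∀ k, ∀ A ∈ S1, (x k ∈ A ↔ z k ∈ A) := by
      intro k A hA
      obtain ⟨W, hWUX, hxW, hzW⟩ := hzsh k
      obtain ⟨p, rfl⟩ := hWUX
      exact (hxW ⟨A, hA⟩).symm.trans (hzW ⟨A, hA⟩)
    have hd : ∀ j, j ≤ n → ∀ i, ∀ A ∈ S, ((w i : ℕ → X) j ∈ A ↔ x (i + j) ∈ A) := by
      intro j
      induction j with
      | zero => intro _ i A _; exact Iff.rfl
      | succ j ih =>
        intro hj i A hA
        have h1 := ha i j (by omega) A hA
        have h2 := ih (by omega) (i + 1) A hA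
        have h3 : i + 1 + j = i + (j + 1) := by omega
        rw [h1, h2, h3]
    refine ⟨⟨z, hzorb⟩, ?_⟩
    intro i
    have hwi : w i ∈ ⋃ s ∈ t,
        {v : ↥(svOrbitSet F) | ∀ j < m s, (v : ℕ → X) j ∈ C s j} := ht (Set.mem_univ _)
    obtain ⟨s, hs, hwB⟩ := mem_iUnion₂.mp hwi
    refine ⟨Wsel s, hWU s, hsub s hwB, hsub s ?_⟩
    intro j hj
    rw [sigmaF_iterate_apply]
    have hms : m s ≤ n := Finset.le_sup hs
    have hCin1 : C s j ∈ S1 := mem_iUnion₂.mpr ⟨s, hs, ⟨j, hj, rfl⟩⟩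
    have hCinS : C s j ∈ S := Or.inl hCin1
    have h1 : (w i : ℕ → X) j ∈ C s j := hwB j hj
    exact (hc (i + j) (C s j) hCin1).mp ((hd j (by omega) i (C s j) hCinS).mp h1)
end

section
/- Let (X, F) and (Y, G) be upper semicontinuous set-valued systems on compact Hausdorff spaces, and let g : X → Y be a subfactor map (a continuous surjection with g(F(x)) ⊆ G(g(x)) for all x ∈ X) that lifts pseudo-orbits: for every finite open cover V_X of X there is a finite open cover V_Y of Y such that every V_Y-pseudo-orbit (y_i) of G admits a V_X-pseudo-orbit (x_i) of F with g(x_i) = y_i for all i. If (X, F) has the set-valued shadowing property, then (Y, G) has the set-valued shadowing property. -/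
open Set Filter Metric Topology

/-- Theorem 9.2: if `g` is a subfactor map between compact Hausdorff
set-valued systems which lifts pseudo-orbits, and `(X, F)` has the set-valued shadowing
property, then so does `(Y, G)`. -/
theorem svShadowing_of_subfactor_lifts_pseudoOrbits
    {X Y : Type*} [TopologicalSpace X] [CompactSpace X] [T2Space X]
    [TopologicalSpace Y] [CompactSpace Y] [T2Space Y]
    (F : X → Set X) (G : Y → Set Y)
    (hFne : ∀ x, (F x).Nonempty) (hFcpt : ∀ x, IsCompact (F x)) (hFusc : USCSV F)
    (hGne : ∀ y, (G y).Nonempty) (hGcpt : ∀ y, IsCompact (G y)) (hGusc : USCSV G)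
    (g : X → Y) (hgc : Continuous g) (hgs : Function.Surjective g)
    (hsub : ∀ x : X, g '' F x ⊆ G (g x))
    (hlift : ∀ VX : Set (Set X), IsFOC VX →
      ∃ VY : Set (Set Y), IsFOC VY ∧
        ∀ y : ℕ → Y, IsSVPseudoOrbit G VY y →
          ∃ x : ℕ → X, IsSVPseudoOrbit F VX x ∧ ∀ i, g (x i) = y i)
    (hshad : SVShadowing F) :
    SVShadowing G := by
  intro U hU
  -- pull back cover
  set U' : Set (Set X) := (fun W => g ⁻¹' W) '' U with hU'def
  have hU' : IsFOC U' := by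
    refine ⟨hU.1.image _, ?_, ?_⟩
    · rintro V ⟨W, hW, rfl⟩
      exact (hU.2.1 W hW).preimage hgc
    · apply Set.eq_univ_of_forall
      intro x
      have : g x ∈ ⋃₀ U := by rw [hU.2.2]; trivial
      obtain ⟨W, hW, hx⟩ := this
      exact ⟨g ⁻¹' W, ⟨W, hW, rfl⟩, hx⟩
  obtain ⟨VX, hVX, hVXshad⟩ := hshad U' hU'
  obtain ⟨VY, hVY, hVYlift⟩ := hlift VX hVX
  refine ⟨VY, hVY, ?_⟩
  intro y hy
  obtain ⟨x, hx, hgx⟩ := hVYlift y hy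
  obtain ⟨z, hz, hshadow⟩ := hVXshad x hx
  refine ⟨fun i => g (z i), ?_, ?_⟩
  · intro i
    exact hsub (z i) ⟨z (i+1), hz i, rfl⟩
  · intro i
    obtain ⟨V, ⟨W, hW, rfl⟩, hxV, hzV⟩ := hshadow i
    exact ⟨W, hW, by rw [← hgx i]; exact hxV, hzV⟩
end
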